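/- arXiv:2207.08572 — 2 statements merged into one kernel-verified Lean document; each statement's English description precedes it below -/
import Mathlib

section
/- Let σ and θ be finite substitutions and X any set of variables. Then: (1) if σ ≼ θ then σ↾X ≼ θ↾X; (2) if σ ≈ θ then σ↾X ≈ θ↾X, where σ↾X denotes the restriction of σ to Dom(σ) ∩ X. -/
/-- A first-order language: function symbols with arities and predicate
symbols with arities.  Variables are natural numbers. -/
structure FOLang where
  Func : Type
  farity : Func → ℕ
  Pred : Type
  parity : Pred → ℕ

/-- The language has at least one constant. -/
def FOLang.HasConst (L : FOLang) : Prop := ∃ f : L.Func, L.farity f = 0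

/-- Terms over a language. -/
inductive FOTerm (L : FOLang) : Type where
  | var : ℕ → FOTerm L
  | func : (f : L.Func) → (Fin (L.farity f) → FOTerm L) → FOTerm L

namespace FOTerm

variable {L : FOLang}

/-- The (finite) set of variables occurring in a term. -/
def vars : FOTerm L → Finset ℕ
  | .var x => {x}
  | .func _ ts => Finset.univ.biUnion fun i => (ts i).vars

/-- Application of a (total) substitution to a term: simultaneously replace
every variable `x` by the term `f x`. -/
def applyT (f : ℕ → FOTerm L) : FOTerm L → FOTerm L
  | .var x => f x
  | .func g ts => .func g fun i => (ts i).applyT f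

end FOTerm

/-- A pre-interpretation: a non-empty universe together with an
interpretation of the function symbols. -/
structure FOStruc (L : FOLang) where
  carrier : Type
  inhab : Nonempty carrier
  funcs : (f : L.Func) → (Fin (L.farity f) → carrier) → carrier

/-- Evaluation of a term under a valuation. -/
def FOTerm.eval {L : FOLang} (M : FOStruc L) (h : ℕ → M.carrier) : FOTerm L → M.carrier
  | .var x => h x
  | .func f ts => M.funcs f fun i => (ts i).eval M h

/-- The set of `M`-instances of a term: values of the term under all
valuations. -/
def InstT {L : FOLang} (M : FOStruc L) (t : FOTerm L) : Set M.carrier :=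
  { a | ∃ h : ℕ → M.carrier, t.eval M h = a }

/-- `M` is a model of the free equality axioms `FEA(L)`. -/
structure IsFEA {L : FOLang} (M : FOStruc L) : Prop where
  inj : ∀ f : L.Func, Function.Injective (M.funcs f)
  disj : ∀ f g : L.Func, f ≠ g → ∀ a b, M.funcs f a ≠ M.funcs g b
  occ : ∀ (x : ℕ) (t : FOTerm L), t ≠ .var x → x ∈ t.vars →
      ∀ h : ℕ → M.carrier, h x ≠ t.eval M h

/-- The domain has at least two elements. -/
def FOStruc.Nontriv {L : FOLang} (M : FOStruc L) : Prop :=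
  ∃ a b : M.carrier, a ≠ b

/-- The difference set `Diff(s,t)`: `InDiff s t (s',t')` means the pair
`(s',t')` belongs to `Diff(s,t)`. -/
inductive InDiff {L : FOLang} : FOTerm L → FOTerm L → FOTerm L × FOTerm L → Prop where
  | var (x : ℕ) : InDiff (.var x) (.var x) (.var x, .var x)
  | varVar {x y : ℕ} : x ≠ y → InDiff (.var x) (.var y) (.var x, .var y)
  | varFunc (x : ℕ) (f : L.Func) (ts : Fin (L.farity f) → FOTerm L) :
      InDiff (.var x) (.func f ts) (.var x, .func f ts)
  | funcVar (f : L.Func) (ss : Fin (L.farity f) → FOTerm L) (y : ℕ) :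
      InDiff (.func f ss) (.var y) (.func f ss, .var y)
  | funcFunc {f g : L.Func} (ss : Fin (L.farity f) → FOTerm L)
      (ts : Fin (L.farity g) → FOTerm L) : f ≠ g →
      InDiff (.func f ss) (.func g ts) (.func f ss, .func g ts)
  | func {f : L.Func} (ss ts : Fin (L.farity f) → FOTerm L) (i : Fin (L.farity f))
      {p : FOTerm L × FOTerm L} :
      InDiff (ss i) (ts i) p → InDiff (.func f ss) (.func f ts) p
/-- An interpretation: a pre-interpretation together with an interpretation
of the predicate symbols. -/
structure FOInterp (L : FOLang) extends FOStruc L where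
  preds : (p : L.Pred) → (Fin (L.parity p) → carrier) → Prop

/-- First-order formulas. -/
inductive FOForm (L : FOLang) : Type where
  | tru : FOForm L
  | fal : FOForm L
  | eq : FOTerm L → FOTerm L → FOForm L
  | atom : (p : L.Pred) → (Fin (L.parity p) → FOTerm L) → FOForm L
  | not : FOForm L → FOForm L
  | and : FOForm L → FOForm L → FOForm L
  | or : FOForm L → FOForm L → FOForm L
  | imp : FOForm L → FOForm L → FOForm L
  | iff : FOForm L → FOForm L → FOForm L
  | ex : ℕ → FOForm L → FOForm L
  | all : ℕ → FOForm L → FOForm L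

namespace FOForm

variable {L : FOLang}

/-- Tarskian satisfaction of a formula in an interpretation under a valuation. -/
def Sat (I : FOInterp L) (h : ℕ → I.carrier) : FOForm L → Prop
  | .tru => True
  | .fal => False
  | .eq s t => s.eval I.toFOStruc h = t.eval I.toFOStruc h
  | .atom p ts => I.preds p fun i => (ts i).eval I.toFOStruc h
  | .not F => ¬ F.Sat I h
  | .and F G => F.Sat I h ∧ G.Sat I h
  | .or F G => F.Sat I h ∨ G.Sat I h
  | .imp F G => F.Sat I h → G.Sat I h
  | .iff F G => F.Sat I h ↔ G.Sat I h
  | .ex x F => ∃ d : I.carrier, F.Sat I (Function.update h x d)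
  | .all x F => ∀ d : I.carrier, F.Sat I (Function.update h x d)

/-- Free variables of a formula. -/
def fv : FOForm L → Finset ℕ
  | .tru => ∅
  | .fal => ∅
  | .eq s t => s.vars ∪ t.vars
  | .atom _ ts => Finset.univ.biUnion fun i => (ts i).vars
  | .not F => F.fv
  | .and F G => F.fv ∪ G.fv
  | .or F G => F.fv ∪ G.fv
  | .imp F G => F.fv ∪ G.fv
  | .iff F G => F.fv ∪ G.fv
  | .ex x F => F.fv.erase x
  | .all x F => F.fv.erase x

end FOForm

/-- The interpretation obtained from a pre-interpretation by interpreting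
every predicate symbol as the empty relation (for formulas without atoms
the choice is irrelevant). -/
def FOStruc.toInterp {L : FOLang} (M : FOStruc L) : FOInterp L :=
  { toFOStruc := M, preds := fun _ _ => False }

/-- Satisfaction of an (equational) formula in a pre-interpretation. -/
def ESat {L : FOLang} (M : FOStruc L) (h : ℕ → M.carrier) (F : FOForm L) : Prop :=
  F.Sat M.toInterp h

/-- The set of solutions of a formula in a pre-interpretation. -/
def SolE {L : FOLang} (M : FOStruc L) (F : FOForm L) : Set (ℕ → M.carrier) :=
  { h | ESat M h F }

/-- EQ-formulas: built from `True`, `False` and equations using `∧` and `∃`. -/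
inductive IsEQ {L : FOLang} : FOForm L → Prop where
  | tru : IsEQ .tru
  | fal : IsEQ .fal
  | eq (s t : FOTerm L) : IsEQ (.eq s t)
  | and {F G : FOForm L} : IsEQ F → IsEQ G → IsEQ (.and F G)
  | ex (x : ℕ) {F : FOForm L} : IsEQ F → IsEQ (.ex x F)

/-- Equational formulas: first-order formulas with no atoms other than
equations. -/
inductive IsEquational {L : FOLang} : FOForm L → Prop where
  | tru : IsEquational .tru
  | fal : IsEquational .fal
  | eq (s t : FOTerm L) : IsEquational (.eq s t)
  | not {F : FOForm L} : IsEquational F → IsEquational (.not F)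
  | and {F G : FOForm L} : IsEquational F → IsEquational G → IsEquational (.and F G)
  | or {F G : FOForm L} : IsEquational F → IsEquational G → IsEquational (.or F G)
  | imp {F G : FOForm L} : IsEquational F → IsEquational G → IsEquational (.imp F G)
  | iff {F G : FOForm L} : IsEquational F → IsEquational G → IsEquational (.iff F G)
  | ex (x : ℕ) {F : FOForm L} : IsEquational F → IsEquational (.ex x F)
  | all (x : ℕ) {F : FOForm L} : IsEquational F → IsEquational (.all x F)

/-- `F ≼ F'` : `F → F'` is true in every model of `FEA(L)`. -/
def EQle {L : FOLang} (F F' : FOForm L) : Prop :=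
  ∀ M : FOStruc L, IsFEA M → ∀ h : ℕ → M.carrier, ESat M h F → ESat M h F'

/-- `F ≈ F'` : `F ↔ F'` is true in every model of `FEA(L)`. -/
def EQequiv {L : FOLang} (F F' : FOForm L) : Prop := EQle F F' ∧ EQle F' F

/-- `F ≺ F'`. -/
def EQlt {L : FOLang} (F F' : FOForm L) : Prop := EQle F F' ∧ ¬ EQequiv F F'

/-- The conjunction `x₁ = s₁ ∧ … ∧ xₙ = sₙ`. -/
def conjOf {L : FOLang} : List (ℕ × FOTerm L) → FOForm L
  | [] => .tru
  | [p] => .eq (.var p.1) p.2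
  | p :: rest => .and (.eq (.var p.1) p.2) (conjOf rest)

/-- The formula `(∃ z₁) … (∃ z_k) F`. -/
def exOf {L : FOLang} (zs : List ℕ) (F : FOForm L) : FOForm L :=
  zs.foldr .ex F

/-- The disjunction `F₁ ∨ … ∨ Fₙ`. -/
def disjOf {L : FOLang} : List (FOForm L) → FOForm L
  | [] => .fal
  | [F] => F
  | F :: rest => .or F (disjOf rest)

/-- A formula is in solved form if it is `True`, `False`, or of the shape
`∃ z₁ … ∃ z_k (x₁ = s₁ ∧ … ∧ xₙ = sₙ)` where the `xᵢ` and `z_j` are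
pairwise distinct, no `xᵢ` occurs in any right-hand side, every `z_j`
occurs in the conjunction, and no `sᵢ` is one of the `z_j`. -/
def SolvedForm {L : FOLang} (F : FOForm L) : Prop :=
  F = .tru ∨ F = .fal ∨
    ∃ (zs : List ℕ) (eqs : List (ℕ × FOTerm L)),
      eqs ≠ [] ∧
      F = exOf zs (conjOf eqs) ∧
      (eqs.map Prod.fst ++ zs).Nodup ∧
      (∀ p ∈ eqs, ∀ q ∈ eqs, p.1 ∉ q.2.vars) ∧
      (∀ z ∈ zs, ∃ p ∈ eqs, z ∈ p.2.vars) ∧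
      (∀ z ∈ zs, ∀ p ∈ eqs, p.2 ≠ .var z)

/-- The projection of an EQ-formula onto a finite set of variables:
existentially quantify the free variables not in `X`; the projection of
`False` is `False`. -/
def projE {L : FOLang} (E : FOForm L) (X : Finset ℕ) : FOForm L :=
  match E with
  | .fal => .fal
  | E => exOf ((E.fv \ X).sort (· ≤ ·)) E

/-- The universal closure of a formula. -/
def univClosure {L : FOLang} (F : FOForm L) : FOForm L :=
  (F.fv.sort (· ≤ ·)).foldr .all F

/-- A formula is valid if it is true in every interpretation (under every
valuation). -/
def FOValid {L : FOLang} (F : FOForm L) : Prop :=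
  ∀ (I : FOInterp L) (h : ℕ → I.carrier), F.Sat I h

/-- An EQ-formula is consistent if it has a solution in some model of the
free equality axioms. -/
def EQConsistent {L : FOLang} (E : FOForm L) : Prop :=
  ∃ M : FOStruc L, IsFEA M ∧ ∃ h : ℕ → M.carrier, ESat M h E
/-- Ground terms: terms with no variables. -/
def GroundTerm (L : FOLang) : Type := { t : FOTerm L // t.vars = ∅ }

/-- The Herbrand pre-interpretation: its domain is the set of ground terms
and function symbols are interpreted formally. -/
def Herbrand (L : FOLang) (hc : L.HasConst) : FOStruc L where
  carrier := GroundTerm L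
  inhab := by
    obtain ⟨f, hf⟩ := hc
    refine ⟨⟨.func f (fun i => Fin.elim0 (Fin.cast hf i)), ?_⟩⟩
    ext x
    simp only [FOTerm.vars, Finset.mem_biUnion, Finset.mem_univ, true_and,
      Finset.notMem_empty, iff_false, not_exists]
    intro i
    exact Fin.elim0 (Fin.cast hf i)
  funcs := fun f ts => ⟨.func f (fun i => (ts i).1), by
    ext x
    simp only [FOTerm.vars, Finset.mem_biUnion, Finset.mem_univ, true_and,
      Finset.notMem_empty, iff_false, not_exists]
    intro i hx
    rw [(ts i).2] at hx
    exact Finset.notMem_empty x hx⟩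

/-- The language obtained by adding a countably infinite set of new
constants. -/
def addConsts (L : FOLang) : FOLang where
  Func := L.Func ⊕ ℕ
  farity := Sum.elim L.farity fun _ => 0
  Pred := L.Pred
  parity := L.parity

/-- The canonical embedding of terms into the extended language. -/
def FOTerm.lift {L : FOLang} : FOTerm L → FOTerm (addConsts L)
  | .var x => .var x
  | .func f ts => .func (Sum.inl f) fun i => (ts i).lift

/-- The canonical embedding of formulas into the extended language. -/
def FOForm.lift {L : FOLang} : FOForm L → FOForm (addConsts L)
  | .tru => .tru
  | .fal => .fal
  | .eq s t => .eq s.lift t.lift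
  | .atom p ts => .atom p fun i => (ts i).lift
  | .not F => .not F.lift
  | .and F G => .and F.lift G.lift
  | .or F G => .or F.lift G.lift
  | .imp F G => .imp F.lift G.lift
  | .iff F G => .iff F.lift G.lift
  | .ex x F => .ex x F.lift
  | .all x F => .all x F.lift
/-- A finite substitution: a finite set of variables (its domain) together
with an assignment of terms to variables which is the identity outside the
domain. -/
structure FinSubst (L : FOLang) where
  dom : Finset ℕ
  map : ℕ → FOTerm L
  outside : ∀ x ∉ dom, map x = .var x

namespace FinSubst

variable {L : FOLang}

/-- `Range(σ)`: the set of variables occurring in the terms `σ x`, `x ∈ Dom(σ)`. -/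
def range (σ : FinSubst L) : Finset ℕ :=
  σ.dom.biUnion fun x => (σ.map x).vars

/-- `θ` is an extension of `σ`. -/
def Extends (θ σ : FinSubst L) : Prop :=
  σ.dom ⊆ θ.dom ∧ ∀ x ∈ σ.dom, θ.map x = σ.map x

/-- `θ` is a regular extension of `σ`: it extends `σ` and maps
`Dom(θ) \ Dom(σ)` injectively into the variables not in `Range(σ)`. -/
def RegExt (θ σ : FinSubst L) : Prop :=
  Extends θ σ ∧
  (∀ x ∈ θ.dom, x ∉ σ.dom → ∃ y : ℕ, y ∉ σ.range ∧ θ.map x = .var y) ∧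
  Set.InjOn θ.map ↑(θ.dom \ σ.dom)

/-- The set of `M`-instances of a substitution. -/
def Inst {L : FOLang} (M : FOStruc L) (σ : FinSubst L) : Set (ℕ → M.carrier) :=
  { h | ∃ g : ℕ → M.carrier, ∀ x ∈ σ.dom, h x = (σ.map x).eval M g }

open Classical in
/-- The restriction of `σ` to `Dom(σ) ∩ X`. -/
noncomputable def restrict (σ : FinSubst L) (X : Set ℕ) : FinSubst L where
  dom := σ.dom.filter fun x => x ∈ X
  map := fun x => if x ∈ σ.dom ∧ x ∈ X then σ.map x else .var x
  outside := fun x hx => if_neg fun h => hx (Finset.mem_filter.2 ⟨h.1, h.2⟩)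

/-- The composition `σθ`, defined on `Dom(σ)` by `x ↦ (σ x)θ`. -/
def comp (σ θ : FinSubst L) : FinSubst L where
  dom := σ.dom
  map := fun x => if x ∈ σ.dom then (σ.map x).applyT θ.map else .var x
  outside := fun _ hx => if_neg hx

/-- `σ ≼ θ` : `θ` is more general than `σ`. -/
def Le (σ θ : FinSubst L) : Prop :=
  ∃ σ' θ' τ : FinSubst L,
    RegExt σ' σ ∧ RegExt θ' θ ∧ σ'.dom = θ'.dom ∧
    θ'.range ⊆ τ.dom ∧ σ' = θ'.comp τ

/-- `σ ≈ θ`. -/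
def Equiv (σ θ : FinSubst L) : Prop := Le σ θ ∧ Le θ σ

/-- A permutation: a substitution mapping its domain injectively to
variables. -/
def IsPerm (τ : FinSubst L) : Prop :=
  (∀ x ∈ τ.dom, ∃ y : ℕ, τ.map x = .var y) ∧ Set.InjOn τ.map ↑τ.dom

/-- The empty substitution. -/
def empty (L : FOLang) : FinSubst L where
  dom := ∅
  map := fun x => .var x
  outside := fun _ _ => rfl

/-- The kernel of a substitution: the intersection of all sets `X` of
variables such that `σ↾X ≈ σ`. -/
def kernel (σ : FinSubst L) : Set ℕ :=
  ⋂₀ { X : Set ℕ | Equiv (σ.restrict X) σ }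

end FinSubst

noncomputable section

theorem exists_notin_finset (s : Finset ℕ) : ∃ n : ℕ, n ∉ s :=
  ⟨s.sup id + 1, fun h => by
    have := Finset.le_sup (f := id) h
    simp only [id] at this
    omega⟩

/-- The first variable not belonging to a given finite set of variables. -/
def freshVar (s : Finset ℕ) : ℕ := Nat.find (exists_notin_finset s)

/-- Insert a binding into a substitution. -/
def FinSubst.insertB {L : FOLang} (σ : FinSubst L) (x : ℕ) (t : FOTerm L) :
    FinSubst L where
  dom := insert x σ.dom
  map := Function.update σ.map x t
  outside := by
    intro z hz
    have hzx : z ≠ x := fun h => hz (h ▸ Finset.mem_insert_self x σ.dom)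
    have hzd : z ∉ σ.dom := fun h => hz (Finset.mem_insert_of_mem h)
    rw [Function.update_of_ne hzx]
    exact σ.outside z hzd

/-- One step of the regular-extension procedure: extend the substitution
with a binding for `x` (to itself if possible, otherwise to the first
variable not occurring in the range). -/
def regStep {L : FOLang} (acc : FinSubst L) (x : ℕ) : FinSubst L :=
  if x ∈ acc.dom then acc
  else acc.insertB x (.var (if x ∈ acc.range then freshVar acc.range else x))

/-- Restrict `σ` to the free variables of `F` and extend the result
regularly to a substitution whose domain is exactly `fv F`. -/
def FinSubst.extendFV {L : FOLang} (σ : FinSubst L) (F : FOForm L) : FinSubst L :=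
  (F.fv.sort (· ≤ ·)).foldl regStep (σ.restrict ↑F.fv)

/-- Capture-avoiding simultaneous substitution on formulas (bound variables
are renamed as needed). -/
def FOForm.applyF {L : FOLang} (f : ℕ → FOTerm L) : FOForm L → FOForm L
  | .tru => .tru
  | .fal => .fal
  | .eq s t => .eq (s.applyT f) (t.applyT f)
  | .atom p ts => .atom p fun i => (ts i).applyT f
  | .not F => .not (F.applyF f)
  | .and F G => .and (F.applyF f) (G.applyF f)
  | .or F G => .or (F.applyF f) (G.applyF f)
  | .imp F G => .imp (F.applyF f) (G.applyF f)
  | .iff F G => .iff (F.applyF f) (G.applyF f)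
  | .ex x G =>
      let R : Finset ℕ := (G.fv.erase x).biUnion fun z => (f z).vars
      let y : ℕ := if x ∈ R then freshVar R else x
      .ex y (G.applyF (Function.update f x (.var y)))
  | .all x G =>
      let R : Finset ℕ := (G.fv.erase x).biUnion fun z => (f z).vars
      let y : ℕ := if x ∈ R then freshVar R else x
      .all y (G.applyF (Function.update f x (.var y)))

/-- The application `Fσ` of a finite substitution to a formula: restrict
`σ` to the free variables of `F`, extend regularly to all of `fv F`, and
substitute capture-avoidingly. -/
def FOForm.applyS {L : FOLang} (σ : FinSubst L) (F : FOForm L) : FOForm L :=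
  F.applyF (σ.extendFV F).map

end
/-- The set of finite substitutions together with an added bottom element
`⊥` (represented by `none`): the extended preorder. -/
def LeBot {L : FOLang} : Option (FinSubst L) → Option (FinSubst L) → Prop
  | none, _ => True
  | some _, none => False
  | some σ, some θ => FinSubst.Le σ θ

/-- The induced equivalence on `Subst⊥`. -/
def EquivBot {L : FOLang} (a b : Option (FinSubst L)) : Prop :=
  LeBot a b ∧ LeBot b a

/-- The quotient of `Subst⊥` by `≈`. -/
def SubstQuot (L : FOLang) : Type := Quot (EquivBot (L := L))

/-- The induced partial order on the quotient `Subst⊥/≈`. -/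
def SubstQuotLe {L : FOLang} (a b : SubstQuot L) : Prop :=
  ∃ s t : Option (FinSubst L), Quot.mk _ s = a ∧ Quot.mk _ t = b ∧ LeBot s t

/-- EQ-formulas as a subtype. -/
def EQSub (L : FOLang) : Type := { F : FOForm L // IsEQ F }

/-- The quotient of the set of EQ-formulas by `≈`. -/
def EQQuot (L : FOLang) : Type :=
  Quot (fun a b : EQSub L => EQequiv a.1 b.1)

/-- The induced partial order on the quotient of EQ-formulas. -/
def EQQuotLe {L : FOLang} (a b : EQQuot L) : Prop :=
  ∃ E E' : EQSub L, Quot.mk _ E = a ∧ Quot.mk _ E' = b ∧ EQle E.1 E'.1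

/-- The substitution `{x₁↦s₁, …, xₙ↦sₙ, y₁↦y₁, …, y_k↦y_k}` associated
with a solved form with equations `eqs` and parameters `params`. -/
theorem lookup_eq_none_of_not_mem {L : FOLang} (x : ℕ) :
    ∀ eqs : List (ℕ × FOTerm L), x ∉ eqs.map Prod.fst → eqs.lookup x = none := by
  intro eqs
  induction eqs with
  | nil => intro _; rfl
  | cons p rest ih =>
    intro hx1
    have hp : p.1 ≠ x := by
      intro h
      exact hx1 (by simp [h])
    have hr : x ∉ rest.map Prod.fst := fun h => hx1 (by simp [h])
    have hxp : (x == p.1) = false := beq_eq_false_iff_ne.mpr fun h => hp h.symm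
    simp only [List.lookup, hxp]
    exact ih hr

def solvedSubst {L : FOLang} (eqs : List (ℕ × FOTerm L)) (params : Finset ℕ) :
    FinSubst L where
  dom := (eqs.map Prod.fst).toFinset ∪ params
  map := fun x => (eqs.lookup x).getD (.var x)
  outside := by
    intro x hx
    have hx1 : x ∉ eqs.map Prod.fst := fun h =>
      hx (Finset.mem_union_left _ (List.mem_toFinset.2 h))
    simp [lookup_eq_none_of_not_mem x eqs hx1]
namespace FinSubst

variable {L : FOLang}

theorem ext' {σ θ : FinSubst L} (h1 : σ.dom = θ.dom) (h2 : σ.map = θ.map) :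
    σ = θ := by
  cases σ; cases θ; simp_all

open Classical in
theorem mem_dom_restrict {σ : FinSubst L} {X : Set ℕ} {x : ℕ} :
    x ∈ (σ.restrict X).dom ↔ x ∈ σ.dom ∧ x ∈ X := by
  simp [restrict, Finset.mem_filter]

theorem map_restrict_of_mem {σ : FinSubst L} {X : Set ℕ} {x : ℕ}
    (h : x ∈ σ.dom ∧ x ∈ X) : (σ.restrict X).map x = σ.map x := by
  classical
  simp [restrict, h.1, h.2]

theorem map_restrict_of_not_mem {σ : FinSubst L} {X : Set ℕ} {x : ℕ}
    (h : ¬ (x ∈ σ.dom ∧ x ∈ X)) : (σ.restrict X).map x = .var x := by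
  classical
  simp only [restrict, if_neg h]

theorem range_restrict_subset (σ : FinSubst L) (X : Set ℕ) :
    (σ.restrict X).range ⊆ σ.range := by
  intro y hy
  rw [range, Finset.mem_biUnion] at hy
  obtain ⟨x, hx, hxy⟩ := hy
  rw [mem_dom_restrict] at hx
  rw [map_restrict_of_mem hx] at hxy
  exact Finset.mem_biUnion.2 ⟨x, hx.1, hxy⟩

theorem le_restrict {σ θ : FinSubst L} (X : Set ℕ) (h : Le σ θ) :
    Le (σ.restrict X) (θ.restrict X) := by
  classical
  obtain ⟨σ', θ', τ, hσ', hθ', hdom, hrg, heq⟩ := h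
  -- the "safe" variables
  set Y : Set ℕ := {x | (x ∈ σ.dom → x ∈ X) ∧ (x ∈ θ.dom → x ∈ X)} with hY
  refine ⟨σ'.restrict Y, θ'.restrict Y, τ, ?_, ?_, ?_, ?_, ?_⟩
  · -- RegExt (σ'.restrict Y) (σ.restrict X)
    refine ⟨⟨?_, ?_⟩, ?_, ?_⟩
    · intro x hx
      rw [mem_dom_restrict] at hx ⊢
      exact ⟨hσ'.1.1 hx.1, fun _ => hx.2, fun _ => hx.2⟩
    · intro x hx
      rw [mem_dom_restrict] at hx
      rw [map_restrict_of_mem hx, map_restrict_of_mem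
        (⟨hσ'.1.1 hx.1, fun _ => hx.2, fun _ => hx.2⟩ : _ ∈ σ'.dom ∧ _ ∈ Y)]
      exact hσ'.1.2 x hx.1
    · intro x hx hxr
      rw [mem_dom_restrict] at hx
      have hxs : x ∉ σ.dom := by
        intro hmem
        exact hxr (mem_dom_restrict.2 ⟨hmem, hx.2.1 hmem⟩)
      obtain ⟨y, hy1, hy2⟩ := hσ'.2.1 x hx.1 hxs
      exact ⟨y, fun hc => hy1 (range_restrict_subset σ X hc),
        by rw [map_restrict_of_mem hx]; exact hy2⟩
    · intro a ha b hb hab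
      simp only [Finset.coe_sdiff, Set.mem_diff, Finset.mem_coe,
        mem_dom_restrict] at ha hb
      have has : a ∉ σ.dom := fun hm => ha.2 ⟨hm, ha.1.2.1 hm⟩
      have hbs : b ∉ σ.dom := fun hm => hb.2 ⟨hm, hb.1.2.1 hm⟩
      rw [map_restrict_of_mem ha.1, map_restrict_of_mem hb.1] at hab
      exact hσ'.2.2 (by simp [ha.1.1, has]) (by simp [hb.1.1, hbs]) hab
  · -- RegExt (θ'.restrict Y) (θ.restrict X)
    refine ⟨⟨?_, ?_⟩, ?_, ?_⟩
    · intro x hx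
      rw [mem_dom_restrict] at hx ⊢
      exact ⟨hθ'.1.1 hx.1, fun _ => hx.2, fun _ => hx.2⟩
    · intro x hx
      rw [mem_dom_restrict] at hx
      rw [map_restrict_of_mem hx, map_restrict_of_mem
        (⟨hθ'.1.1 hx.1, fun _ => hx.2, fun _ => hx.2⟩ : _ ∈ θ'.dom ∧ _ ∈ Y)]
      exact hθ'.1.2 x hx.1
    · intro x hx hxr
      rw [mem_dom_restrict] at hx
      have hxs : x ∉ θ.dom := by
        intro hmem
        exact hxr (mem_dom_restrict.2 ⟨hmem, hx.2.2 hmem⟩)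
      obtain ⟨y, hy1, hy2⟩ := hθ'.2.1 x hx.1 hxs
      exact ⟨y, fun hc => hy1 (range_restrict_subset θ X hc),
        by rw [map_restrict_of_mem hx]; exact hy2⟩
    · intro a ha b hb hab
      simp only [Finset.coe_sdiff, Set.mem_diff, Finset.mem_coe,
        mem_dom_restrict] at ha hb
      have has : a ∉ θ.dom := fun hm => ha.2 ⟨hm, ha.1.2.2 hm⟩
      have hbs : b ∉ θ.dom := fun hm => hb.2 ⟨hm, hb.1.2.2 hm⟩
      rw [map_restrict_of_mem ha.1, map_restrict_of_mem hb.1] at hab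
      exact hθ'.2.2 (by simp [ha.1.1, has]) (by simp [hb.1.1, hbs]) hab
  · -- equal domains
    ext x
    rw [mem_dom_restrict, mem_dom_restrict, hdom]
  · -- range ⊆ dom τ
    exact (range_restrict_subset θ' Y).trans hrg
  · -- σ'.restrict Y = (θ'.restrict Y).comp τ
    refine ext' ?_ ?_
    · show (σ'.restrict Y).dom = (θ'.restrict Y).dom
      ext x
      rw [mem_dom_restrict, mem_dom_restrict, hdom]
    funext x
    by_cases hx : x ∈ θ'.dom ∧ x ∈ Y
    · have hxσ : x ∈ σ'.dom ∧ x ∈ Y := ⟨hdom ▸ hx.1, hx.2⟩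
      have hmem : x ∈ (θ'.restrict Y).dom := mem_dom_restrict.2 hx
      simp only [comp, if_pos hmem, map_restrict_of_mem hx,
        map_restrict_of_mem hxσ]
      have : σ'.map x = (θ'.comp τ).map x := by rw [heq]
      rw [this]
      simp [comp, hx.1]
    · have hxσ : ¬ (x ∈ σ'.dom ∧ x ∈ Y) := fun h => hx ⟨hdom ▸ h.1, h.2⟩
      have hmem : x ∉ (θ'.restrict Y).dom := fun h =>
        hx (mem_dom_restrict.1 h)
      simp only [comp, if_neg hmem, map_restrict_of_not_mem hxσ]

end FinSubst

/-- Restriction of substitutions preserves `≼` and `≈`. -/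
theorem restriction_monotone {L : FOLang} (hc : L.HasConst)
    (σ θ : FinSubst L) (X : Set ℕ) :
    (FinSubst.Le σ θ → FinSubst.Le (σ.restrict X) (θ.restrict X)) ∧
    (FinSubst.Equiv σ θ → FinSubst.Equiv (σ.restrict X) (θ.restrict X)) :=
  ⟨FinSubst.le_restrict X,
    fun h => ⟨FinSubst.le_restrict X h.1, FinSubst.le_restrict X h.2⟩⟩
end

section
/- Let Subst⊥ be the set of finite substitutions over L together with an added element ⊥, with the preorder ≼ extended so that ⊥ is below every element, quotiented by the induced equivalence ≈ and ordered by the induced partial order. Let EQ be the quotient of the set of EQ-formulas over L by ≈, ordered by ≼. Then the map Φ defined by: Φ(class of True) = class of the empty substitution, Φ(class of False) = class of ⊥, and Φ(class of E) = class of σ whenever E ≡ ∃z₁…∃z_m (x₁ = s₁ ∧ … ∧ xₙ = sₙ) is a consistent EQ-formula in solved form with parameters (free variables other than the xᵢ) y₁,…,y_k and σ = {x₁↦s₁, …, xₙ↦sₙ, y₁↦y₁, …, y_k↦y_k}, is a well-defined order isomorphism from EQ onto Subst⊥/≈. In particular, Subst⊥/≈ is a complete lattice with greatest element the class of the empty substitution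 and smallest element the class of ⊥. -/
namespace Stmt17

variable {L : FOLang}




/-- Term size. -/
def tsize : FOTerm L → ℕ
  | .var _ => 1
  | .func _ ts => 1 + Finset.univ.sum fun i => tsize (ts i)

theorem tsize_pos (t : FOTerm L) : 0 < tsize t := by
  cases t <;> simp [tsize]

theorem eval_applyT (M : FOStruc L) (h : ℕ → M.carrier) (g : ℕ → FOTerm L)
    (t : FOTerm L) : (t.applyT g).eval M h = t.eval M fun v => (g v).eval M h := by
  induction t with
  | var x => rfl
  | func f ts ih =>
    simp only [FOTerm.applyT, FOTerm.eval]
    congr 1; funext i; exact ih i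

theorem eval_agree (M : FOStruc L) {h h' : ℕ → M.carrier} (t : FOTerm L)
    (hag : ∀ v ∈ t.vars, h v = h' v) : t.eval M h = t.eval M h' := by
  induction t with
  | var x => exact hag x (by simp [FOTerm.vars])
  | func f ts ih =>
    simp only [FOTerm.eval]
    congr 1; funext i
    exact ih i fun v hv => hag v (by simp [FOTerm.vars]; exact ⟨i, hv⟩)

/-- The canonical term model. -/
abbrev TM (L : FOLang) : FOStruc L := ⟨FOTerm L, ⟨.var 0⟩, fun f ts => .func f ts⟩

theorem TM_eval (h : ℕ → FOTerm L) (t : FOTerm L) : t.eval (TM L) h = t.applyT h := by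
  induction t with
  | var x => rfl
  | func f ts ih =>
    simp only [FOTerm.eval, FOTerm.applyT]
    show FOTerm.func f _ = _
    congr 1; funext i; exact ih i

theorem applyT_applyT (g f : ℕ → FOTerm L) (t : FOTerm L) :
    (t.applyT g).applyT f = t.applyT fun v => (g v).applyT f := by
  have := eval_applyT (TM L) f g t
  rwa [TM_eval, TM_eval, show (fun v => (g v).eval (TM L) f) = fun v => (g v).applyT f
    from funext fun v => TM_eval f (g v)] at this

theorem applyT_agree {h h' : ℕ → FOTerm L} (t : FOTerm L)
    (hag : ∀ v ∈ t.vars, h v = h' v) : t.applyT h = t.applyT h' := by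
  rw [← TM_eval, ← TM_eval]; exact eval_agree _ t hag

theorem applyT_var (t : FOTerm L) : (t.applyT fun v => .var v) = t := by
  induction t with
  | var x => rfl
  | func f ts ih => simp only [FOTerm.applyT]; congr 1; funext i; exact ih i

theorem vars_applyT (g : ℕ → FOTerm L) (t : FOTerm L) :
    (t.applyT g).vars = t.vars.biUnion fun v => (g v).vars := by
  induction t with
  | var x => simp [FOTerm.applyT, FOTerm.vars]
  | func f ts ih =>
    simp only [FOTerm.applyT, FOTerm.vars]
    ext x
    simp only [Finset.mem_biUnion, Finset.mem_univ, true_and]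
    constructor
    · rintro ⟨i, hx⟩
      rw [ih i] at hx
      simp only [Finset.mem_biUnion] at hx
      obtain ⟨v, hv, hx⟩ := hx
      exact ⟨v, ⟨i, hv⟩, hx⟩
    · rintro ⟨v, ⟨i, hv⟩, hx⟩
      refine ⟨i, ?_⟩
      rw [ih i]
      exact Finset.mem_biUnion.2 ⟨v, hv, hx⟩

theorem tsize_le_applyT (g : ℕ → FOTerm L) (t : FOTerm L) :
    tsize t ≤ tsize (t.applyT g) := by
  induction t with
  | var x => exact tsize_pos _
  | func f ts ih =>
    simp only [FOTerm.applyT, tsize]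
    exact Nat.add_le_add_left (Finset.sum_le_sum fun i _ => ih i) 1

theorem tsize_lt_applyT {x : ℕ} (g : ℕ → FOTerm L) {t : FOTerm L}
    (hx : x ∈ t.vars) (hne : t ≠ .var x) : tsize (g x) < tsize (t.applyT g) := by
  induction t with
  | var y =>
    simp only [FOTerm.vars, Finset.mem_singleton] at hx
    exact absurd (by rw [hx]) hne
  | func f ts ih =>
    simp only [FOTerm.vars, Finset.mem_biUnion, Finset.mem_univ, true_and] at hx
    obtain ⟨i, hi⟩ := hx
    simp only [FOTerm.applyT, tsize]
    calc tsize (g x) ≤ tsize ((ts i).applyT g) := by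
          by_cases h : ts i = .var x
          · rw [h]; simp [FOTerm.applyT]
          · exact le_of_lt (ih i hi h)
      _ < 1 + Finset.univ.sum fun j => tsize ((ts j).applyT g) := by
          have : tsize ((ts i).applyT g) ≤ Finset.univ.sum fun j => tsize ((ts j).applyT g) :=
            Finset.single_le_sum (f := fun j => tsize ((ts j).applyT g))
              (fun j _ => Nat.zero_le _) (Finset.mem_univ i)
          omega

theorem tsize_applyT_renaming (ρ : ℕ → ℕ) (t : FOTerm L) :
    tsize (t.applyT fun v => .var (ρ v)) = tsize t := by
  induction t with
  | var x => rfl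
  | func f ts ih =>
    simp only [FOTerm.applyT, tsize]
    congr 1
    exact Finset.sum_congr rfl fun i _ => ih i

theorem isFEA_TM : IsFEA (TM L) := by
  constructor
  · intro f a b hab
    simpa [TM, FOTerm.func.injEq] using hab
  · intro f g hfg a b hab
    simp only [TM, FOTerm.func.injEq] at hab
    exact hfg hab.1
  · intro x t hne hx h heq
    rw [TM_eval] at heq
    have h1 : tsize ((fun v => h v) x) < tsize (t.applyT fun v => h v) :=
      tsize_lt_applyT _ hx hne
    rw [← heq] at h1
    exact lt_irrefl _ h1






theorem FinSubst.ext' {σ θ : FinSubst L} (hd : σ.dom = θ.dom) (hm : σ.map = θ.map) :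
    σ = θ := by cases σ; cases θ; simp_all

/-- A strict bound on a finite set of variables. -/
def bnd (s : Finset ℕ) : ℕ := s.sup id + 1

theorem lt_bnd {s : Finset ℕ} {v : ℕ} (hv : v ∈ s) : v < bnd s := by
  have := Finset.le_sup (f := id) hv
  simp only [id] at this
  simp only [bnd]
  omega

/-- All variables relevant to a pair of substitutions. -/
def avars (σ θ : FinSubst L) : Finset ℕ := σ.dom ∪ σ.range ∪ θ.dom ∪ θ.range

/-- The canonical generic instance of a substitution. -/
def hstar (σ : FinSubst L) (B : ℕ) : ℕ → FOTerm L := fun x =>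
  if x ∈ σ.dom then (σ.map x).applyT fun v => .var (v + B) else .var x

theorem hstar_mem (σ : FinSubst L) (B : ℕ) : hstar σ B ∈ σ.Inst (TM L) := by
  refine ⟨fun v => .var (v + B), fun x hx => ?_⟩
  simp [hstar, hx, TM_eval]

theorem inst_nonempty (σ : FinSubst L) : (σ.Inst (TM L)).Nonempty :=
  ⟨hstar σ 0, hstar_mem σ 0⟩

/-- Transfer of generic instance inclusion to any pre-interpretation. -/
theorem inst_mono_of_TM {σ θ : FinSubst L}
    (h0 : σ.Inst (TM L) ⊆ θ.Inst (TM L)) (M : FOStruc L) : σ.Inst M ⊆ θ.Inst M := by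
  intro h hh
  obtain ⟨g, hg⟩ := hh
  set B := bnd (avars σ θ) with hBdef
  have hB : ∀ v ∈ avars σ θ, v < B := fun v hv => lt_bnd hv
  obtain ⟨γ, hγ⟩ := h0 (hstar_mem σ B)
  simp only [TM_eval] at hγ
  set μ : ℕ → M.carrier := fun v => if B ≤ v then g (v - B) else h v with hμdef
  have claimA : ∀ x ∈ θ.dom, h x = (hstar σ B x).eval M μ := by
    intro x hx
    by_cases hxσ : x ∈ σ.dom
    · have : (hstar σ B x).eval M μ
          = (σ.map x).eval M fun v => (FOTerm.var (v + B)).eval M μ := by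
        simp only [hstar, if_pos hxσ]
        exact eval_applyT M μ _ _
      rw [this]
      have : (σ.map x).eval M (fun v => (FOTerm.var (v + B)).eval M μ)
          = (σ.map x).eval M g := by
        apply eval_agree
        intro v _
        show μ (v + B) = g v
        simp [hμdef]
      rw [this]
      exact hg x hxσ
    · simp only [hstar, if_neg hxσ]
      show h x = μ x
      have hxB : x < B := hB x (by simp [avars, hx])
      simp [hμdef, Nat.not_le.2 hxB]
  refine ⟨fun v => (γ v).eval M μ, fun x hx => ?_⟩
  rw [claimA x hx, hγ x hx, eval_applyT]

/-- `Le` implies instance inclusion in every pre-interpretation. -/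
theorem inst_mono_of_le {σ θ : FinSubst L} (hle : σ.Le θ) (M : FOStruc L) :
    σ.Inst M ⊆ θ.Inst M := by
  classical
  obtain ⟨σ', θ', τ, hσ', hθ', hdom, hrange, heq⟩ := hle
  intro h hh
  obtain ⟨g, hg⟩ := hh
  -- modify g on the fresh variables of the regular extension σ'
  set P : ℕ → Prop := fun v => ∃ x, (x ∈ σ'.dom ∧ x ∉ σ.dom) ∧ σ'.map x = .var v with hP
  set gt : ℕ → M.carrier := fun v => if hv : P v then h hv.choose else g v with hgt
  have claim1 : ∀ x ∈ σ'.dom, h x = (σ'.map x).eval M gt := by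
    intro x hx
    by_cases hxσ : x ∈ σ.dom
    · rw [hσ'.1.2 x hxσ]
      have : (σ.map x).eval M gt = (σ.map x).eval M g := by
        apply eval_agree
        intro v hv
        have hvr : v ∈ σ.range := Finset.mem_biUnion.2 ⟨x, hxσ, hv⟩
        show gt v = g v
        simp only [hgt]
        rw [dif_neg]
        rintro ⟨x', ⟨hx'd, hx'σ⟩, hx'm⟩
        obtain ⟨y, hy, hym⟩ := hσ'.2.1 x' hx'd hx'σ
        rw [hym] at hx'm
        cases hx'm
        exact hy hvr
      rw [this]; exact hg x hxσ
    · obtain ⟨y, hy, hym⟩ := hσ'.2.1 x hx hxσ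
      rw [hym]
      show h x = gt y
      have hPy : P y := ⟨x, ⟨hx, hxσ⟩, hym⟩
      simp only [hgt]
      rw [dif_pos hPy]
      congr 1
      have hspec := hPy.choose_spec
      have : hPy.choose = x := by
        apply hσ'.2.2
        · simp only [Finset.coe_sdiff, Set.mem_diff, Finset.mem_coe]
          exact ⟨hspec.1.1, hspec.1.2⟩
        · simp only [Finset.coe_sdiff, Set.mem_diff, Finset.mem_coe]
          exact ⟨hx, hxσ⟩
        · rw [hspec.2, hym]
      rw [this]
  refine ⟨fun v => (τ.map v).eval M gt, fun x hx => ?_⟩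
  have hxd : x ∈ σ'.dom := hdom ▸ hθ'.1.1 hx
  have h1 : h x = (σ'.map x).eval M gt := claim1 x hxd
  rw [heq] at h1
  have hxθ' : x ∈ θ'.dom := hdom ▸ hxd
  simp only [FinSubst.comp, if_pos hxθ'] at h1
  rw [h1, eval_applyT]
  have : (θ'.map x) = θ.map x := hθ'.1.2 x hx
  rw [this]

/-- Regular extension of `σ` over `σ.dom ∪ θ.dom` sending new variables to shifted copies. -/
def extA (σ : FinSubst L) (D : Finset ℕ) (C : ℕ) : FinSubst L :=
  ⟨σ.dom ∪ D,
    fun x => if x ∈ σ.dom then σ.map x else if x ∈ D then .var (x + C) else .var x, by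
      intro x hx
      rw [Finset.mem_union] at hx
      push_neg at hx
      simp only [if_neg hx.1, if_neg hx.2]⟩

theorem extA_map_mem {σ : FinSubst L} {D : Finset ℕ} {C : ℕ} {x : ℕ} (hx : x ∈ σ.dom) :
    (extA σ D C).map x = σ.map x := if_pos hx

theorem extA_map_new {σ : FinSubst L} {D : Finset ℕ} {C : ℕ} {x : ℕ} (hx : x ∉ σ.dom)
    (hxD : x ∈ D) : (extA σ D C).map x = .var (x + C) := by
  show (if x ∈ σ.dom then σ.map x else if x ∈ D then _ else _) = _
  rw [if_neg hx, if_pos hxD]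

theorem regExt_extA (σ : FinSubst L) (D : Finset ℕ) {C : ℕ}
    (hC : ∀ v ∈ σ.range, v < C) : FinSubst.RegExt (extA σ D C) σ := by
  refine ⟨⟨Finset.subset_union_left, fun x hx => extA_map_mem hx⟩, ?_, ?_⟩
  · intro x hx hxσ
    have hxD : x ∈ D := by
      rcases Finset.mem_union.1 hx with h | h
      · exact absurd h hxσ
      · exact h
    exact ⟨x + C, fun hmem => absurd (hC _ hmem) (by omega), extA_map_new hxσ hxD⟩
  · intro a ha b hb hab
    simp only [Finset.coe_sdiff, Set.mem_diff, Finset.mem_coe] at ha hb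
    have haD : a ∈ D := by
      rcases Finset.mem_union.1 ha.1 with h | h
      · exact absurd h ha.2
      · exact h
    have hbD : b ∈ D := by
      rcases Finset.mem_union.1 hb.1 with h | h
      · exact absurd h hb.2
      · exact h
    rw [extA_map_new ha.2 haD, extA_map_new hb.2 hbD] at hab
    simp only [FOTerm.var.injEq] at hab
    omega

/-- Back-translation renaming. -/
def piC (σ θ : FinSubst L) (B C : ℕ) : ℕ → FOTerm L := fun u =>
  if B ≤ u then .var (u - B) else if u ∈ θ.dom ∧ u ∉ σ.dom then .var (u + C) else .var u

/-- The connecting substitution. -/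
def tauC (σ θ : FinSubst L) (B C : ℕ) (γ : ℕ → FOTerm L) : FinSubst L :=
  ⟨(extA θ σ.dom C).range,
    fun v => if v ∈ (extA θ σ.dom C).range then
      (if C ≤ v then σ.map (v - C) else (γ v).applyT (piC σ θ B C)) else .var v, by
      intro v hv; simp only [if_neg hv]⟩

/-- From generic instance inclusion to `Le`: the key construction. -/
theorem le_of_inst_TM {σ θ : FinSubst L}
    (h0 : σ.Inst (TM L) ⊆ θ.Inst (TM L)) : σ.Le θ := by
  classical
  set B := bnd (avars σ θ) with hBdef
  have hB : ∀ v ∈ avars σ θ, v < B := fun v hv => lt_bnd hv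
  have hBσd : ∀ v ∈ σ.dom, v < B := fun v hv => hB v (by simp [avars, hv])
  have hBθd : ∀ v ∈ θ.dom, v < B := fun v hv => hB v (by simp [avars, hv])
  have hBσr : ∀ v ∈ σ.range, v < B := fun v hv => hB v (by simp [avars, hv])
  have hBθr : ∀ v ∈ θ.range, v < B := fun v hv => hB v (by simp [avars, hv])
  set C := 2 * B with hC
  obtain ⟨γ, hγ⟩ := h0 (hstar_mem σ B)
  simp only [TM_eval] at hγ
  refine ⟨extA σ θ.dom C, extA θ σ.dom C, tauC σ θ B C γ,
    regExt_extA σ θ.dom (fun v hv => lt_of_lt_of_le (hBσr v hv) (by omega)),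
    regExt_extA θ σ.dom (fun v hv => lt_of_lt_of_le (hBθr v hv) (by omega)),
    by show σ.dom ∪ θ.dom = θ.dom ∪ σ.dom; exact Finset.union_comm _ _,
    Finset.Subset.refl _, ?_⟩
  -- range facts
  have hrg1 : ∀ u ∈ θ.range, u ∈ (extA θ σ.dom C).range := by
    intro u hu
    obtain ⟨x, hx, hxu⟩ := Finset.mem_biUnion.1 hu
    exact Finset.mem_biUnion.2 ⟨x, Finset.mem_union_left _ hx, by rwa [extA_map_mem hx]⟩
  have hrg2 : ∀ v ∈ σ.dom, v ∉ θ.dom → v + C ∈ (extA θ σ.dom C).range := by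
    intro v hv hvθ
    refine Finset.mem_biUnion.2 ⟨v, Finset.mem_union_right _ hv, ?_⟩
    rw [extA_map_new hvθ hv]
    simp [FOTerm.vars]
  apply FinSubst.ext'
  · show σ.dom ∪ θ.dom = θ.dom ∪ σ.dom
    exact Finset.union_comm _ _
  · funext v
    show (extA σ θ.dom C).map v = (if v ∈ θ.dom ∪ σ.dom then
      ((extA θ σ.dom C).map v).applyT (tauC σ θ B C γ).map else .var v)
    by_cases hvθ : v ∈ θ.dom
    · rw [if_pos (Finset.mem_union_left _ hvθ), extA_map_mem hvθ]
      have step1 : (θ.map v).applyT (tauC σ θ B C γ).map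
          = (θ.map v).applyT fun u => (γ u).applyT (piC σ θ B C) := by
        apply applyT_agree
        intro u hu
        have hur : u ∈ θ.range := Finset.mem_biUnion.2 ⟨v, hvθ, hu⟩
        show (if u ∈ _ then _ else _) = _
        rw [if_pos (hrg1 u hur), if_neg (by have := hBθr u hur; omega)]
      have step2 : (θ.map v).applyT (fun u => (γ u).applyT (piC σ θ B C))
          = (hstar σ B v).applyT (piC σ θ B C) := by
        rw [← applyT_applyT, hγ v hvθ]
      rw [step1, step2]
      by_cases hvσ : v ∈ σ.dom
      · rw [extA_map_mem hvσ]
        simp only [hstar, if_pos hvσ]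
        rw [applyT_applyT]
        have heqf : (fun w => (FOTerm.var (w + B) : FOTerm L).applyT (piC σ θ B C))
            = fun w => (.var w : FOTerm L) := by
          funext w
          show piC σ θ B C (w + B) = _
          simp only [piC, if_pos (Nat.le_add_left B w)]
          congr 1
          omega
        rw [heqf, applyT_var]
      · rw [extA_map_new hvσ hvθ]
        simp only [hstar, if_neg hvσ]
        show _ = piC σ θ B C v
        simp only [piC, if_neg (by have := hBθd v hvθ; omega : ¬ B ≤ v),
          if_pos (⟨hvθ, hvσ⟩ : v ∈ θ.dom ∧ v ∉ σ.dom)]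
    · by_cases hvσ : v ∈ σ.dom
      · rw [if_pos (Finset.mem_union_right _ hvσ), extA_map_mem hvσ,
          extA_map_new hvθ hvσ]
        show σ.map v = (tauC σ θ B C γ).map (v + C)
        show σ.map v = (if v + C ∈ (extA θ σ.dom C).range then
          (if C ≤ v + C then σ.map (v + C - C) else
            (γ (v + C)).applyT (piC σ θ B C)) else .var (v + C))
        rw [if_pos (hrg2 v hvσ hvθ), if_pos (by omega : C ≤ v + C)]
        congr 1
        omega
      · rw [if_neg (by rw [Finset.mem_union]; push_neg; exact ⟨hvθ, hvσ⟩)]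
        show (if v ∈ σ.dom then _ else if v ∈ θ.dom then _ else _) = _
        rw [if_neg hvσ, if_neg hvθ]

theorem le_iff_inst_TM (σ θ : FinSubst L) :
    σ.Le θ ↔ σ.Inst (TM L) ⊆ θ.Inst (TM L) :=
  ⟨fun h => inst_mono_of_le h (TM L), le_of_inst_TM⟩

/-- The semantic invariant on `Subst⊥`. -/
def KInv : Option (FinSubst L) → Set (ℕ → FOTerm L)
  | none => ∅
  | some σ => σ.Inst (TM L)

theorem leBot_iff_KInv (a b : Option (FinSubst L)) : LeBot a b ↔ KInv a ⊆ KInv b := by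
  cases a with
  | none => simp [LeBot, KInv]
  | some σ =>
    cases b with
    | none =>
      simp only [LeBot, KInv]
      constructor
      · exact False.elim
      · intro h
        obtain ⟨x, hx⟩ := inst_nonempty σ
        exact absurd (h hx) (Set.notMem_empty x)
    | some θ => exact le_iff_inst_TM σ θ


theorem esat_ex (M : FOStruc L) (h : ℕ → FOTerm L → False) : True := trivial

theorem sat_agree (I : FOInterp L) (F : FOForm L) :
    ∀ {h h' : ℕ → I.carrier}, (∀ v ∈ F.fv, h v = h' v) → (F.Sat I h ↔ F.Sat I h') := by
  induction F with
  | tru => intro h h' _; exact Iff.rfl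
  | fal => intro h h' _; exact Iff.rfl
  | eq s t =>
    intro h h' hag
    show s.eval _ h = t.eval _ h ↔ s.eval _ h' = t.eval _ h'
    rw [eval_agree _ s fun v hv => hag v (by simp [FOForm.fv, hv]),
      eval_agree _ t fun v hv => hag v (by simp [FOForm.fv, hv])]
  | atom p ts =>
    intro h h' hag
    show I.preds p _ ↔ I.preds p _
    have : (fun i => (ts i).eval I.toFOStruc h) = fun i => (ts i).eval I.toFOStruc h' := by
      funext i
      exact eval_agree _ (ts i) fun v hv => hag v (by
        simp only [FOForm.fv, Finset.mem_biUnion, Finset.mem_univ, true_and]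
        exact ⟨i, hv⟩)
    rw [this]
  | not F ihF =>
    intro h h' hag
    exact not_congr (ihF hag)
  | and F G ihF ihG =>
    intro h h' hag
    exact and_congr (ihF fun v hv => hag v (by simp [FOForm.fv, hv]))
      (ihG fun v hv => hag v (by simp [FOForm.fv, hv]))
  | or F G ihF ihG =>
    intro h h' hag
    exact or_congr (ihF fun v hv => hag v (by simp [FOForm.fv, hv]))
      (ihG fun v hv => hag v (by simp [FOForm.fv, hv]))
  | imp F G ihF ihG =>
    intro h h' hag
    exact imp_congr (ihF fun v hv => hag v (by simp [FOForm.fv, hv]))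
      (ihG fun v hv => hag v (by simp [FOForm.fv, hv]))
  | iff F G ihF ihG =>
    intro h h' hag
    exact iff_congr (ihF fun v hv => hag v (by simp [FOForm.fv, hv]))
      (ihG fun v hv => hag v (by simp [FOForm.fv, hv]))
  | ex x F ihF =>
    intro h h' hag
    show (∃ d, F.Sat I (Function.update h x d)) ↔ ∃ d, F.Sat I (Function.update h' x d)
    refine exists_congr fun d => ihF fun v hv => ?_
    by_cases hvx : v = x
    · subst hvx; simp
    · simp only [Function.update_of_ne hvx]
      exact hag v (Finset.mem_erase.2 ⟨hvx, hv⟩)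
  | all x F ihF =>
    intro h h' hag
    show (∀ d, F.Sat I (Function.update h x d)) ↔ ∀ d, F.Sat I (Function.update h' x d)
    refine forall_congr' fun d => ihF fun v hv => ?_
    by_cases hvx : v = x
    · subst hvx; simp
    · simp only [Function.update_of_ne hvx]
      exact hag v (Finset.mem_erase.2 ⟨hvx, hv⟩)

theorem esat_agree (M : FOStruc L) (F : FOForm L) {h h' : ℕ → M.carrier}
    (hag : ∀ v ∈ F.fv, h v = h' v) : ESat M h F ↔ ESat M h' F :=
  sat_agree _ F hag

theorem exOf_bridge (M : FOStruc L) (zs : List ℕ) (F : FOForm L) :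
    ∀ h : ℕ → M.carrier,
      ESat M h (exOf zs F) ↔ ∃ g, (∀ v, v ∉ zs → g v = h v) ∧ ESat M g F := by
  induction zs with
  | nil =>
    intro h
    constructor
    · intro hs; exact ⟨h, fun v _ => rfl, hs⟩
    · rintro ⟨g, hg, hs⟩
      have : g = h := funext fun v => hg v (by simp)
      rwa [this] at hs
  | cons x zs ih =>
    intro h
    show (∃ d, ESat M (Function.update h x d) (exOf zs F)) ↔ _
    constructor
    · rintro ⟨d, hd⟩
      obtain ⟨g, hg, hs⟩ := (ih (Function.update h x d)).1 hd
      refine ⟨g, fun v hv => ?_, hs⟩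
      have hvx : v ≠ x := fun hh => hv (hh ▸ List.mem_cons_self (a := x) (l := zs))
      rw [hg v fun hh => hv (List.mem_cons_of_mem x hh), Function.update_of_ne hvx]
    · rintro ⟨g, hg, hs⟩
      refine ⟨g x, (ih (Function.update h x (g x))).2 ⟨g, fun v hv => ?_, hs⟩⟩
      by_cases hvx : v = x
      · subst hvx; simp
      · rw [Function.update_of_ne hvx]
        exact hg v (by simp [hvx, hv])

theorem conjOf_cons (p q : ℕ × FOTerm L) (rest : List (ℕ × FOTerm L)) :
    conjOf (p :: q :: rest) = .and (.eq (.var p.1) p.2) (conjOf (q :: rest)) := rfl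

theorem conjOf_bridge (M : FOStruc L) (eqs : List (ℕ × FOTerm L)) (h : ℕ → M.carrier) :
    ESat M h (conjOf eqs) ↔ ∀ p ∈ eqs, h p.1 = p.2.eval M h := by
  induction eqs with
  | nil => simp [conjOf]; exact trivial
  | cons p rest ih =>
    cases rest with
    | nil =>
      show h p.1 = p.2.eval M h ↔ _
      simp
    | cons q rest' =>
      rw [conjOf_cons]
      show (ESat M h (.eq (.var p.1) p.2) ∧ ESat M h (conjOf (q :: rest'))) ↔ _
      rw [ih]
      show ((FOTerm.var p.1).eval M h = p.2.eval M h ∧ _) ↔ _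
      show (h p.1 = p.2.eval M h ∧ _) ↔ _
      simp only [List.mem_cons]
      constructor
      · rintro ⟨h1, h2⟩ r (hr | hr)
        · subst hr; exact h1
        · exact h2 r hr
      · intro hh
        exact ⟨hh p (Or.inl rfl), fun r hr => hh r (Or.inr hr)⟩

theorem fv_exOf (zs : List ℕ) (F : FOForm L) :
    (exOf zs F).fv = F.fv \ zs.toFinset := by
  induction zs with
  | nil => simp [exOf]
  | cons x zs ih =>
    show ((exOf zs F).fv).erase x = _
    rw [ih]
    ext v
    simp only [Finset.mem_erase, Finset.mem_sdiff, List.toFinset_cons, Finset.mem_insert]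
    tauto

theorem mem_fv_conjOf (eqs : List (ℕ × FOTerm L)) (v : ℕ) :
    v ∈ (conjOf eqs).fv ↔ ∃ p ∈ eqs, v = p.1 ∨ v ∈ p.2.vars := by
  induction eqs with
  | nil => simp [conjOf, FOForm.fv]
  | cons p rest ih =>
    cases rest with
    | nil =>
      show v ∈ (FOForm.eq (.var p.1) p.2).fv ↔ _
      simp [FOForm.fv, FOTerm.vars]
    | cons q rest' =>
      rw [conjOf_cons]
      show v ∈ (FOForm.eq (.var p.1) p.2).fv ∪ (conjOf (q :: rest')).fv ↔ _
      rw [Finset.mem_union, ih]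
      simp only [FOForm.fv, Finset.mem_union, FOTerm.vars, Finset.mem_singleton,
        List.mem_cons]
      constructor
      · rintro ((h | h) | ⟨r, hr, hh⟩)
        · exact ⟨p, Or.inl rfl, Or.inl h⟩
        · exact ⟨p, Or.inl rfl, Or.inr h⟩
        · exact ⟨r, Or.inr hr, hh⟩
      · rintro ⟨r, (hr | hr), hh⟩
        · subst hr; exact Or.inl (by tauto)
        · exact Or.inr ⟨r, hr, hh⟩

theorem isEQ_conjOf (eqs : List (ℕ × FOTerm L)) : IsEQ (conjOf eqs) := by
  induction eqs with
  | nil => exact IsEQ.tru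
  | cons p rest ih =>
    cases rest with
    | nil => exact IsEQ.eq _ _
    | cons q rest' => rw [conjOf_cons]; exact IsEQ.and (IsEQ.eq _ _) ih

theorem isEQ_exOf (zs : List ℕ) {F : FOForm L} (hF : IsEQ F) : IsEQ (exOf zs F) := by
  induction zs with
  | nil => exact hF
  | cons x zs ih => exact IsEQ.ex x ih

theorem lookup_of_nodup {eqs : List (ℕ × FOTerm L)} (hnd : (eqs.map Prod.fst).Nodup)
    {p : ℕ × FOTerm L} (hp : p ∈ eqs) : eqs.lookup p.1 = some p.2 := by
  induction eqs with
  | nil => cases hp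
  | cons q rest ih =>
    rcases List.mem_cons.1 hp with h | h
    · subst h
      simp [List.lookup]
    · have hq : q.1 ≠ p.1 := by
        intro hh
        have : q.1 ∈ rest.map Prod.fst := List.mem_map.2 ⟨p, h, hh.symm⟩
        exact (List.nodup_cons.1 hnd).1 this
      simp only [List.lookup, beq_eq_false_iff_ne.2 (Ne.symm hq)]
      exact ih (List.nodup_cons.1 hnd).2 h

/-- Characterization of satisfaction of a solved form as instance membership. -/
theorem solved_char (M : FOStruc L) (zs : List ℕ) (eqs : List (ℕ × FOTerm L))
    (params : Finset ℕ)
    (hnd : (eqs.map Prod.fst).Nodup)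
    (hlz : ∀ p ∈ eqs, p.1 ∉ zs)
    (hlr : ∀ p ∈ eqs, ∀ q ∈ eqs, p.1 ∉ q.2.vars)
    (hpz : ∀ y ∈ params, y ∉ zs)
    (hpl : ∀ y ∈ params, y ∉ eqs.map Prod.fst)
    (hrp : ∀ p ∈ eqs, ∀ v ∈ p.2.vars, v ∉ zs → v ∈ params)
    (h : ℕ → M.carrier) :
    ESat M h (exOf zs (conjOf eqs)) ↔ h ∈ (solvedSubst eqs params).Inst M := by
  rw [exOf_bridge]
  constructor
  · rintro ⟨g, hg, hs⟩
    rw [conjOf_bridge] at hs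
    refine ⟨g, fun x hx => ?_⟩
    rcases Finset.mem_union.1 hx with hx | hx
    · obtain ⟨p, hp, hpx⟩ := List.mem_map.1 (List.mem_toFinset.1 hx)
      subst hpx
      show h p.1 = ((eqs.lookup p.1).getD (.var p.1)).eval M g
      rw [lookup_of_nodup hnd hp]
      show h p.1 = p.2.eval M g
      rw [← hg p.1 (hlz p hp)]
      exact hs p hp
    · show h x = ((eqs.lookup x).getD (.var x)).eval M g
      rw [lookup_eq_none_of_not_mem x eqs (hpl x hx)]
      show h x = (FOTerm.var x).eval M g
      exact (hg x (hpz x hx)).symm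
  · rintro ⟨γ, hγ⟩
    classical
    refine ⟨fun v => if v ∈ zs then γ v else h v, fun v hv => if_neg hv, ?_⟩
    rw [conjOf_bridge]
    intro p hp
    have hp1 : p.1 ∈ (solvedSubst eqs params).dom :=
      Finset.mem_union_left _ (List.mem_toFinset.2 (List.mem_map.2 ⟨p, hp, rfl⟩))
    have hmain := hγ p.1 hp1
    rw [show (solvedSubst eqs params).map p.1 = p.2 by
      show ((eqs.lookup p.1).getD (.var p.1)) = p.2
      rw [lookup_of_nodup hnd hp]; rfl] at hmain
    rw [if_neg (hlz p hp), hmain]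
    apply eval_agree
    intro v hv
    by_cases hvz : v ∈ zs
    · simp [hvz]
    · have hvp : v ∈ params := hrp p hp v hv hvz
      have hv1 : v ∈ (solvedSubst eqs params).dom := Finset.mem_union_right _ hvp
      have := hγ v hv1
      rw [show (solvedSubst eqs params).map v = .var v by
        show ((eqs.lookup v).getD (.var v)) = .var v
        rw [lookup_eq_none_of_not_mem v eqs (hpl v hvp)]; rfl] at this
      simp only [if_neg hvz]
      exact this.symm
/-! ### Most general unifiers -/

def UnifM (M : FOStruc L) (h : ℕ → M.carrier) (P : List (FOTerm L × FOTerm L)) : Prop :=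
  ∀ p ∈ P, p.1.eval M h = p.2.eval M h

def varsP : List (FOTerm L × FOTerm L) → Finset ℕ
  | [] => ∅
  | p :: r => p.1.vars ∪ p.2.vars ∪ varsP r

def sizeP (P : List (FOTerm L × FOTerm L)) : ℕ :=
  (P.map fun p => tsize p.1 + tsize p.2).sum

def isVarT : FOTerm L → Bool
  | .var _ => true
  | _ => false

def badP (P : List (FOTerm L × FOTerm L)) : ℕ :=
  (P.map fun p => if isVarT p.2 && !isVarT p.1 then 1 else 0).sum

theorem mem_varsP {P : List (FOTerm L × FOTerm L)} {v : ℕ} :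
    v ∈ varsP P ↔ ∃ p ∈ P, v ∈ p.1.vars ∨ v ∈ p.2.vars := by
  induction P with
  | nil => simp [varsP]
  | cons p r ih =>
    simp only [varsP, Finset.mem_union, ih, List.mem_cons]
    constructor
    · rintro ((h | h) | ⟨q, hq, hh⟩)
      · exact ⟨p, Or.inl rfl, Or.inl h⟩
      · exact ⟨p, Or.inl rfl, Or.inr h⟩
      · exact ⟨q, Or.inr hq, hh⟩
    · rintro ⟨q, (hq | hq), hh⟩
      · subst hq
        rcases hh with h | h
        · exact Or.inl (Or.inl h)
        · exact Or.inl (Or.inr h)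
      · exact Or.inr ⟨q, hq, hh⟩

theorem unifM_cons {M : FOStruc L} {h : ℕ → M.carrier} {p : FOTerm L × FOTerm L}
    {r : List (FOTerm L × FOTerm L)} :
    UnifM M h (p :: r) ↔ (p.1.eval M h = p.2.eval M h) ∧ UnifM M h r := by
  simp only [UnifM, List.mem_cons]
  constructor
  · intro hh; exact ⟨hh p (Or.inl rfl), fun q hq => hh q (Or.inr hq)⟩
  · rintro ⟨h1, h2⟩ q (hq | hq)
    · subst hq; exact h1
    · exact h2 q hq

/-- Extension of the witness valuation to a larger variable set. -/
theorem ext_gamma (M : FOStruc L) (h : ℕ → M.carrier) (τ : ℕ → FOTerm L)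
    (V W : Finset ℕ) (hVW : V ⊆ W)
    (hτ : ∀ v ∈ V, (τ v).vars ⊆ V) (hid : ∀ v ∈ W, v ∉ V → τ v = .var v) :
    (∃ γ, ∀ v ∈ V, h v = (τ v).eval M γ) ↔ (∃ γ, ∀ v ∈ W, h v = (τ v).eval M γ) := by
  classical
  constructor
  · rintro ⟨γ, hγ⟩
    refine ⟨fun u => if u ∈ V then γ u else h u, fun v hv => ?_⟩
    by_cases hvV : v ∈ V
    · rw [hγ v hvV]
      apply eval_agree
      intro u hu
      rw [if_pos (hτ v hvV hu)]
    · rw [hid v hv hvV]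
      show h v = (if v ∈ V then γ v else h v)
      rw [if_neg hvV]
  · rintro ⟨γ, hγ⟩
    exact ⟨γ, fun v hv => hγ v (hVW hv)⟩

/-- The statement: the system is unsolvable in every FEA model, or has an mgu. -/
def stmtP (P : List (FOTerm L × FOTerm L)) : Prop :=
  (∀ M : FOStruc L, IsFEA M → ∀ h, ¬ UnifM M h P) ∨
  ∃ τ : ℕ → FOTerm L,
    (∀ v, v ∉ varsP P → τ v = .var v) ∧
    (∀ v ∈ varsP P, (τ v).vars ⊆ varsP P) ∧
    ∀ M : FOStruc L, IsFEA M → ∀ h,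
      UnifM M h P ↔ ∃ γ, ∀ v ∈ varsP P, h v = (τ v).eval M γ

theorem varsP_swap (s t : FOTerm L) (r : List (FOTerm L × FOTerm L)) :
    varsP ((s, t) :: r) = varsP ((t, s) :: r) := by
  simp only [varsP]
  ext v
  simp only [Finset.mem_union]
  tauto

theorem unifM_swap (M : FOStruc L) (h : ℕ → M.carrier) (s t : FOTerm L)
    (r : List (FOTerm L × FOTerm L)) :
    UnifM M h ((s, t) :: r) ↔ UnifM M h ((t, s) :: r) := by
  rw [unifM_cons, unifM_cons]
  exact and_congr ⟨Eq.symm, Eq.symm⟩ Iff.rfl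

theorem stmt_swap {s t : FOTerm L} {r : List (FOTerm L × FOTerm L)}
    (hQ : stmtP ((t, s) :: r)) : stmtP ((s, t) :: r) := by
  rcases hQ with hQ | ⟨τ, h1, h2, h3⟩
  · exact Or.inl fun M hM h hu => hQ M hM h ((unifM_swap M h s t r).1 hu)
  · refine Or.inr ⟨τ, ?_, ?_, ?_⟩
    · rw [varsP_swap]; exact h1
    · rw [varsP_swap]; exact h2
    · intro M hM h
      rw [unifM_swap, varsP_swap]
      exact h3 M hM h

/-- One-variable substitution. -/
def sub1 (x : ℕ) (t : FOTerm L) : ℕ → FOTerm L := fun v => if v = x then t else .var v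

theorem eval_sub1 {M : FOStruc L} {h : ℕ → M.carrier} {x : ℕ} {t : FOTerm L}
    (hx : h x = t.eval M h) (u : FOTerm L) :
    (u.applyT (sub1 x t)).eval M h = u.eval M h := by
  rw [eval_applyT]
  apply eval_agree
  intro v _
  show (sub1 x t v).eval M h = h v
  by_cases hv : v = x
  · subst hv; simp only [sub1, if_pos rfl]; exact hx.symm
  · simp only [sub1, if_neg hv]; rfl

theorem mgu_main : ∀ (n m b : ℕ) (P : List (FOTerm L × FOTerm L)),
    (varsP P).card ≤ n → sizeP P ≤ m → badP P ≤ b → stmtP P := by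
  intro n
  induction n using Nat.strong_induction_on with
  | _ n IHn =>
  intro m
  induction m using Nat.strong_induction_on with
  | _ m IHm =>
  intro b
  induction b using Nat.strong_induction_on with
  | _ b IHb =>
  intro P hcard hsize hbad
  classical
  match P with
  | [] =>
    refine Or.inr ⟨fun v => .var v, fun _ _ => rfl, ?_, ?_⟩
    · intro v hv; simp [varsP] at hv
    · intro M hM h
      constructor
      · intro _; exact ⟨h, fun v hv => by simp [varsP] at hv⟩
      · intro _ q hq; cases hq
  | (s, t) :: rest =>
    cases s with
    | var x =>
      by_cases ht : t = .var x
      · -- trivial equation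
        subst ht
        have hsub : varsP rest ⊆ varsP ((FOTerm.var x, FOTerm.var x) :: rest) := by
          intro v hv; simp only [varsP, Finset.mem_union]; tauto
        have hsize' : sizeP rest < m := by
          have : sizeP ((FOTerm.var x, FOTerm.var x) :: rest) = 2 + sizeP rest := by
            simp [sizeP, tsize]
            try omega
          omega
        have hrec := IHm (sizeP rest) (by omega) b rest
          (le_trans (Finset.card_le_card hsub) hcard) le_rfl
          (by
            have : badP ((FOTerm.var x, FOTerm.var x) :: rest) = badP rest := by
              simp [badP, isVarT]
            omega)
        rcases hrec with hl | ⟨τ, h1, h2, h3⟩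
        · refine Or.inl fun M hM h hu => hl M hM h (unifM_cons.1 hu).2
        · refine Or.inr ⟨τ, ?_, ?_, ?_⟩
          · intro v hv; exact h1 v fun hh => hv (hsub hh)
          · intro v hv
            by_cases hvr : v ∈ varsP rest
            · exact fun u hu => hsub (h2 v hvr hu)
            · rw [h1 v hvr]
              intro u hu
              simp only [FOTerm.vars, Finset.mem_singleton] at hu
              subst hu; exact hv
          · intro M hM h
            rw [unifM_cons]
            have triv : (FOTerm.var x).eval M h = (FOTerm.var x).eval M h := rfl
            rw [h3 M hM h]
            constructor
            · rintro ⟨_, hγ⟩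
              rw [ext_gamma M h τ (varsP rest) (varsP ((FOTerm.var x, FOTerm.var x) :: rest))
                hsub h2 (fun v _ hv => h1 v hv)] at hγ
              exact hγ
            · intro hγ
              refine ⟨rfl, ?_⟩
              rw [ext_gamma M h τ (varsP rest) (varsP ((FOTerm.var x, FOTerm.var x) :: rest))
                hsub h2 (fun v _ hv => h1 v hv)]
              exact hγ
      · by_cases hocc : x ∈ t.vars
        · -- occurs check failure
          refine Or.inl fun M hM h hu => ?_
          have h1 := (unifM_cons.1 hu).1
          exact hM.occ x t ht hocc h h1
        · -- variable elimination
          have hxP : x ∈ varsP ((FOTerm.var x, t) :: rest) := by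
            simp [varsP, FOTerm.vars]
          set rest' := rest.map (fun q => (q.1.applyT (sub1 x t), q.2.applyT (sub1 x t)))
            with hrest'
          have hvsub : varsP rest' ⊆ (varsP ((FOTerm.var x, t) :: rest)).erase x := by
            intro v hv
            obtain ⟨q, hq, hor⟩ := mem_varsP.1 hv
            obtain ⟨q0, hq0, hq0e⟩ := List.mem_map.1 hq
            subst hq0e
            have key : ∀ u : FOTerm L, v ∈ (u.applyT (sub1 x t)).vars →
                (v ∈ u.vars ∧ v ≠ x) ∨ v ∈ t.vars := by
              intro u hu
              rw [vars_applyT] at hu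
              obtain ⟨w, hw, hvw⟩ := Finset.mem_biUnion.1 hu
              by_cases hwx : w = x
              · subst hwx; right; simpa [sub1] using hvw
              · left
                simp only [sub1, if_neg hwx, FOTerm.vars, Finset.mem_singleton] at hvw
                subst hvw; exact ⟨hw, hwx⟩
            have hvne : v ≠ x := by
              rcases hor with h | h
              · rcases key _ h with ⟨_, hne⟩ | hmem
                · exact hne
                · intro hh; subst hh; exact hocc hmem
              · rcases key _ h with ⟨_, hne⟩ | hmem
                · exact hne
                · intro hh; subst hh; exact hocc hmem
            refine Finset.mem_erase.2 ⟨hvne, ?_⟩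
            simp only [varsP, Finset.mem_union]
            rcases hor with h | h
            · rcases key _ h with ⟨hm, _⟩ | hmem
              · right; exact mem_varsP.2 ⟨q0, hq0, Or.inl hm⟩
              · left; right; exact hmem
            · rcases key _ h with ⟨hm, _⟩ | hmem
              · right; exact mem_varsP.2 ⟨q0, hq0, Or.inr hm⟩
              · left; right; exact hmem
          have hcard' : (varsP rest').card < (varsP ((FOTerm.var x, t) :: rest)).card :=
            lt_of_le_of_lt (Finset.card_le_card hvsub)
              (Finset.card_erase_lt_of_mem hxP)
          have hn1 : 1 ≤ n := le_trans (Nat.one_le_iff_ne_zero.2 (by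
            intro hc0
            have := Finset.card_eq_zero.1 (Nat.le_zero.1 (hc0 ▸ hcard))
            rw [this] at hxP; exact absurd hxP (Finset.notMem_empty x))) le_rfl
          have hrec := IHn (n - 1) (by omega) (sizeP rest') (badP rest') rest'
            (by omega) le_rfl le_rfl
          -- the equivalence between the original and the reduced system
          have hiff : ∀ (M : FOStruc L) (h : ℕ → M.carrier),
              UnifM M h ((FOTerm.var x, t) :: rest) ↔
                (h x = t.eval M h) ∧ UnifM M h rest' := by
            intro M h
            rw [unifM_cons]
            constructor
            · rintro ⟨h1, h2⟩
              refine ⟨h1, fun q hq => ?_⟩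
              obtain ⟨q0, hq0, hq0e⟩ := List.mem_map.1 hq
              subst hq0e
              show (q0.1.applyT (sub1 x t)).eval M h = (q0.2.applyT (sub1 x t)).eval M h
              rw [eval_sub1 h1, eval_sub1 h1]
              exact h2 q0 hq0
            · rintro ⟨h1, h2⟩
              refine ⟨h1, fun q hq => ?_⟩
              have := h2 _ (List.mem_map.2 ⟨q, hq, rfl⟩)
              show q.1.eval M h = q.2.eval M h
              rw [eval_sub1 h1, eval_sub1 h1] at this
              exact this
          rcases hrec with hl | ⟨τ', h1, h2, h3⟩
          · refine Or.inl fun M hM h hu => hl M hM h ((hiff M h).1 hu).2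
          · refine Or.inr ⟨fun v => if v ∈ varsP ((FOTerm.var x, t) :: rest) then (sub1 x t v).applyT τ' else .var v,
              fun v hv => if_neg hv, ?_, ?_⟩
            · intro v hv
              show (if v ∈ varsP ((FOTerm.var x, t) :: rest)
                then FOTerm.applyT τ' (sub1 x t v) else FOTerm.var v).vars ⊆ _
              rw [if_pos hv]
              intro u hu
              rw [vars_applyT] at hu
              obtain ⟨w, hw, huw⟩ := Finset.mem_biUnion.1 hu
              -- w is a variable of `sub1 x t v`, i.e. w ∈ t.vars (if v = x) or w = v
              have hwV : w ∈ varsP ((FOTerm.var x, t) :: rest) ∧ w ≠ x := by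
                by_cases hvx : v = x
                · subst hvx
                  simp only [sub1, if_pos rfl] at hw
                  refine ⟨?_, fun hh => hocc (hh ▸ hw)⟩
                  simp only [varsP, Finset.mem_union]
                  left; right; exact hw
                · simp only [sub1, if_neg hvx, FOTerm.vars, Finset.mem_singleton] at hw
                  subst hw
                  exact ⟨hv, hvx⟩
              by_cases hwr : w ∈ varsP rest'
              · have := h2 w hwr huw
                exact (Finset.erase_subset x _) (hvsub this)
              · rw [h1 w hwr] at huw
                simp only [FOTerm.vars, Finset.mem_singleton] at huw
                subst huw
                exact hwV.1
            · intro M hM h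
              rw [hiff M h, h3 M hM h]
              constructor
              · rintro ⟨hx1, γ, hγ⟩
                refine ⟨fun u => if u ∈ varsP rest' then γ u else h u, fun v hv => ?_⟩
                have evτ' : ∀ w, w ∈ varsP ((FOTerm.var x, t) :: rest) → w ≠ x →
                    (τ' w).eval M (fun u => if u ∈ varsP rest' then γ u else h u) = h w := by
                  intro w hwV hwx
                  by_cases hwr : w ∈ varsP rest'
                  · rw [eval_agree M (τ' w) (h' := γ)
                      (fun u hu => if_pos (h2 w hwr hu))]
                    exact (hγ w hwr).symm
                  · rw [h1 w hwr]
                    show (if w ∈ varsP rest' then γ w else h w) = h w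
                    rw [if_neg hwr]
                show h v = (if v ∈ varsP ((FOTerm.var x, t) :: rest)
                  then FOTerm.applyT τ' (sub1 x t v) else FOTerm.var v).eval M _
                rw [if_pos hv]
                by_cases hvx : v = x
                · rw [hvx]
                  simp only [sub1, eq_self_iff_true, if_true]
                  rw [eval_applyT]
                  rw [hx1]
                  apply Eq.symm
                  apply eval_agree
                  intro u hu
                  have huV : u ∈ varsP ((FOTerm.var x, t) :: rest) := by
                    simp only [varsP, Finset.mem_union]; left; right; exact hu
                  exact evτ' u huV fun hh => hocc (hh ▸ hu)
                · simp only [sub1, if_neg hvx]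
                  show h v = (τ' v).eval M _
                  exact (evτ' v hv hvx).symm
              · rintro ⟨γ, hγ⟩
                have hvarsub : ∀ w ∈ varsP rest',
                    w ∈ varsP ((FOTerm.var x, t) :: rest) ∧ w ≠ x := by
                  intro w hw
                  have := hvsub hw
                  exact ⟨Finset.erase_subset x _ this, (Finset.mem_erase.1 this).1⟩
                have hval : ∀ w ∈ varsP rest', h w = (τ' w).eval M γ := by
                  intro w hw
                  obtain ⟨hwV, hwx⟩ := hvarsub w hw
                  have := hγ w hwV
                  simp only [if_pos hwV, sub1, if_neg hwx] at this
                  exact this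
                have hx1 : h x = t.eval M h := by
                  have := hγ x hxP
                  simp only [if_pos hxP, sub1, eq_self_iff_true, if_true] at this
                  rw [eval_applyT] at this
                  rw [this]
                  apply eval_agree
                  intro u hu
                  have huV : u ∈ varsP ((FOTerm.var x, t) :: rest) := by
                    simp only [varsP, Finset.mem_union]; left; right; exact hu
                  have hux : u ≠ x := fun hh => hocc (hh ▸ hu)
                  by_cases hur : u ∈ varsP rest'
                  · exact (hval u hur).symm
                  · rw [h1 u hur]
                    show γ u = h u
                    have := hγ u huV
                    simp only [if_pos huV, sub1, if_neg hux, FOTerm.applyT] at this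
                    rw [h1 u hur] at this
                    exact this.symm
                exact ⟨hx1, γ, hval⟩
    | func f ss =>
      cases t with
      | var y =>
        -- swap
        have hbP : 1 ≤ badP ((FOTerm.func f ss, FOTerm.var y) :: rest) := by
          simp [badP, isVarT]
        have hb1 : 1 ≤ b := le_trans hbP hbad
        have hQ := IHb (b - 1) (by omega) ((FOTerm.var y, FOTerm.func f ss) :: rest)
          (by rw [← varsP_swap]; exact hcard)
          (by
            have : sizeP ((FOTerm.var y, FOTerm.func f ss) :: rest)
                = sizeP ((FOTerm.func f ss, FOTerm.var y) :: rest) := by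
              simp [sizeP]
              try omega
            omega)
          (by
            have : badP ((FOTerm.var y, FOTerm.func f ss) :: rest) + 1
                = badP ((FOTerm.func f ss, FOTerm.var y) :: rest) := by
              simp [badP, isVarT]
              omega
            omega)
        exact stmt_swap hQ
      | func g ts =>
        by_cases hfg : f = g
        · subst hfg
          -- decomposition
          set P' := (List.ofFn fun i => (ss i, ts i)) ++ rest with hP'
          have hvars_eq : varsP ((FOTerm.func f ss, FOTerm.func f ts) :: rest) = varsP P' := by
            have hofn : ∀ (k : ℕ) (u w : Fin k → FOTerm L) (r : List (FOTerm L × FOTerm L)),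
                varsP ((List.ofFn fun i => (u i, w i)) ++ r)
                  = (Finset.univ.biUnion fun i => (u i).vars)
                    ∪ (Finset.univ.biUnion fun i => (w i).vars) ∪ varsP r := by
              intro k
              induction k with
              | zero => intro u w r; simp [varsP]
              | succ k ihk =>
                intro u w r
                rw [List.ofFn_succ]
                show varsP ((u 0, w 0) :: ((List.ofFn fun i => (u i.succ, w i.succ)) ++ r)) = _
                rw [show varsP ((u 0, w 0) :: ((List.ofFn fun i => (u i.succ, w i.succ)) ++ r))
                    = (u 0).vars ∪ (w 0).vars ∪
                      varsP ((List.ofFn fun i => (u i.succ, w i.succ)) ++ r) from rfl,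
                  ihk]
                ext v
                simp only [Finset.mem_union, Finset.mem_biUnion, Finset.mem_univ, true_and]
                constructor
                · rintro ((h | h) | ((⟨i, h⟩ | ⟨i, h⟩) | h))
                  · exact Or.inl (Or.inl ⟨0, h⟩)
                  · exact Or.inl (Or.inr ⟨0, h⟩)
                  · exact Or.inl (Or.inl ⟨i.succ, h⟩)
                  · exact Or.inl (Or.inr ⟨i.succ, h⟩)
                  · exact Or.inr h
                · rintro ((⟨i, h⟩ | ⟨i, h⟩) | h)
                  · rcases Fin.eq_zero_or_eq_succ i with h0 | ⟨j, hj⟩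
                    · subst h0; exact Or.inl (Or.inl h)
                    · subst hj; exact Or.inr (Or.inl (Or.inl ⟨j, h⟩))
                  · rcases Fin.eq_zero_or_eq_succ i with h0 | ⟨j, hj⟩
                    · subst h0; exact Or.inl (Or.inr h)
                    · subst hj; exact Or.inr (Or.inl (Or.inr ⟨j, h⟩))
                  · exact Or.inr (Or.inr h)
            rw [hofn]
            rfl
          have hsize' : sizeP P' < sizeP ((FOTerm.func f ss, FOTerm.func f ts) :: rest) := by
            have h1 : sizeP P' = (Finset.univ.sum fun i => tsize (ss i))
                + (Finset.univ.sum fun i => tsize (ts i)) + sizeP rest := by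
              have : ∀ (k : ℕ) (u w : Fin k → FOTerm L) (r : List (FOTerm L × FOTerm L)),
                  sizeP ((List.ofFn fun i => (u i, w i)) ++ r)
                    = (Finset.univ.sum fun i => tsize (u i))
                      + (Finset.univ.sum fun i => tsize (w i)) + sizeP r := by
                intro k
                induction k with
                | zero => intro u w r; simp [sizeP]
                | succ k ihk =>
                  intro u w r
                  rw [List.ofFn_succ]
                  show sizeP ((u 0, w 0) :: ((List.ofFn fun i => (u i.succ, w i.succ)) ++ r)) = _
                  rw [show sizeP ((u 0, w 0) :: ((List.ofFn fun i => (u i.succ, w i.succ)) ++ r))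
                      = tsize (u 0) + tsize (w 0)
                        + sizeP ((List.ofFn fun i => (u i.succ, w i.succ)) ++ r) from rfl,
                    ihk]
                  rw [Fin.sum_univ_succ (f := fun i => tsize (u i)),
                    Fin.sum_univ_succ (f := fun i => tsize (w i))]
                  omega
              exact this _ ss ts rest
            have h2 : sizeP ((FOTerm.func f ss, FOTerm.func f ts) :: rest)
                = 1 + (Finset.univ.sum fun i => tsize (ss i))
                  + (1 + Finset.univ.sum fun i => tsize (ts i)) + sizeP rest := by
              show tsize (FOTerm.func f ss) + tsize (FOTerm.func f ts) + sizeP rest = _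
              simp only [tsize]
              try omega
            omega
          have hiff : ∀ (M : FOStruc L), IsFEA M → ∀ h : ℕ → M.carrier,
              UnifM M h ((FOTerm.func f ss, FOTerm.func f ts) :: rest) ↔ UnifM M h P' := by
            intro M hM h
            rw [unifM_cons]
            have hofn : UnifM M h P' ↔
                (∀ i, (ss i).eval M h = (ts i).eval M h) ∧ UnifM M h rest := by
              constructor
              · intro hu
                constructor
                · intro i
                  have := hu (ss i, ts i) (List.mem_append_left _
                    (List.mem_ofFn.2 ⟨i, rfl⟩))
                  exact this
                · intro q hq; exact hu q (List.mem_append_right _ hq)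
              · rintro ⟨h1, h2⟩ q hq
                rcases List.mem_append.1 hq with hq | hq
                · obtain ⟨i, hi⟩ := List.mem_ofFn.1 hq
                  rw [← hi]; exact h1 i
                · exact h2 q hq
            rw [hofn]
            constructor
            · rintro ⟨h1, h2⟩
              refine ⟨fun i => ?_, h2⟩
              have : M.funcs f (fun i => (ss i).eval M h) = M.funcs f fun i => (ts i).eval M h :=
                h1
              have := hM.inj f this
              exact congrFun this i
            · rintro ⟨h1, h2⟩
              refine ⟨?_, h2⟩
              show M.funcs f (fun i => (ss i).eval M h) = M.funcs f fun i => (ts i).eval M h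
              congr 1
              funext i
              exact h1 i
          have hrec := IHm (sizeP P') (by omega) (badP P') P'
            (by rw [← hvars_eq]; exact hcard) le_rfl le_rfl
          rcases hrec with hl | ⟨τ, h1, h2, h3⟩
          · exact Or.inl fun M hM h hu => hl M hM h ((hiff M hM h).1 hu)
          · refine Or.inr ⟨τ, ?_, ?_, ?_⟩
            · rw [hvars_eq]; exact h1
            · rw [hvars_eq]; exact h2
            · intro M hM h
              rw [hiff M hM h, hvars_eq]
              exact h3 M hM h
        · -- clash
          refine Or.inl fun M hM h hu => ?_
          have h1 := (unifM_cons.1 hu).1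
          exact hM.disj f g hfg _ _ h1
/-! ### Prenexing EQ-formulas -/

theorem varsP_append (P Q : List (FOTerm L × FOTerm L)) :
    varsP (P ++ Q) = varsP P ∪ varsP Q := by
  induction P with
  | nil => simp [varsP]
  | cons p r ih =>
    show p.1.vars ∪ p.2.vars ∪ varsP (r ++ Q) = p.1.vars ∪ p.2.vars ∪ varsP r ∪ varsP Q
    rw [ih]
    ext v
    simp only [Finset.mem_union]
    tauto

theorem unifM_append {M : FOStruc L} {h : ℕ → M.carrier} {P Q : List (FOTerm L × FOTerm L)} :
    UnifM M h (P ++ Q) ↔ UnifM M h P ∧ UnifM M h Q := by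
  simp only [UnifM, List.mem_append]
  constructor
  · intro hh; exact ⟨fun p hp => hh p (Or.inl hp), fun p hp => hh p (Or.inr hp)⟩
  · rintro ⟨h1, h2⟩ p (hp | hp)
    · exact h1 p hp
    · exact h2 p hp

theorem unifM_agree {M : FOStruc L} {g g' : ℕ → M.carrier} {P : List (FOTerm L × FOTerm L)}
    (hag : ∀ v ∈ varsP P, g v = g' v) : UnifM M g P ↔ UnifM M g' P := by
  have key : ∀ p ∈ P, ∀ u : FOTerm L, (u.vars ⊆ p.1.vars ∪ p.2.vars) →
      u.eval M g = u.eval M g' := by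
    intro p hp u hu
    apply eval_agree
    intro v hv
    exact hag v (mem_varsP.2 ⟨p, hp, Finset.mem_union.1 (hu hv)⟩)
  constructor
  · intro hh p hp
    rw [← key p hp p.1 Finset.subset_union_left, ← key p hp p.2 Finset.subset_union_right]
    exact hh p hp
  · intro hh p hp
    rw [key p hp p.1 Finset.subset_union_left, key p hp p.2 Finset.subset_union_right]
    exact hh p hp

/-- Renaming of a list of variables by a shift. -/
def renS (zs : List ℕ) (S : ℕ) : ℕ → FOTerm L := fun v =>
  if v ∈ zs then .var (v + S) else .var v

def renP (zs : List ℕ) (S : ℕ) (P : List (FOTerm L × FOTerm L)) :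
    List (FOTerm L × FOTerm L) :=
  P.map fun p => (p.1.applyT (renS zs S), p.2.applyT (renS zs S))

theorem renS_eval {M : FOStruc L} (g : ℕ → M.carrier) (zs : List ℕ) (S : ℕ) (w : ℕ) :
    ((renS zs S w : FOTerm L)).eval M g = if w ∈ zs then g (w + S) else g w := by
  by_cases hw : w ∈ zs <;> simp [renS, hw] <;> rfl

theorem eval_renS {M : FOStruc L} (g : ℕ → M.carrier) (zs : List ℕ) (S : ℕ)
    (u : FOTerm L) :
    (u.applyT (renS zs S)).eval M g
      = u.eval M fun w => if w ∈ zs then g (w + S) else g w := by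
  rw [eval_applyT]
  apply eval_agree
  intro w _
  exact renS_eval g zs S w

theorem mem_varsP_renP {zs : List ℕ} {S : ℕ} {P : List (FOTerm L × FOTerm L)} {v : ℕ} :
    v ∈ varsP (renP zs S P) → (v ∈ varsP P ∧ v ∉ zs) ∨ ∃ w ∈ zs, v = w + S := by
  intro hv
  obtain ⟨p, hp, hor⟩ := mem_varsP.1 hv
  obtain ⟨q, hq, hqe⟩ := List.mem_map.1 hp
  subst hqe
  have key : ∀ u : FOTerm L, (u.vars ⊆ q.1.vars ∪ q.2.vars) →
      v ∈ (u.applyT (renS zs S)).vars →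
      (v ∈ varsP P ∧ v ∉ zs) ∨ ∃ w ∈ zs, v = w + S := by
    intro u hsub hu
    rw [vars_applyT] at hu
    obtain ⟨w, hw, hvw⟩ := Finset.mem_biUnion.1 hu
    by_cases hwz : w ∈ zs
    · right
      refine ⟨w, hwz, ?_⟩
      simp only [renS, if_pos hwz, FOTerm.vars, Finset.mem_singleton] at hvw
      exact hvw
    · left
      simp only [renS, if_neg hwz, FOTerm.vars, Finset.mem_singleton] at hvw
      subst hvw
      exact ⟨mem_varsP.2 ⟨q, hq, Finset.mem_union.1 (hsub hw)⟩, hwz⟩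
  rcases hor with h | h
  · exact key q.1 Finset.subset_union_left h
  · exact key q.2 Finset.subset_union_right h

theorem ren_bridge (M : FOStruc L) (h : ℕ → M.carrier) (P : List (FOTerm L × FOTerm L))
    (zs : List ℕ) (B S : ℕ) (hBS : B ≤ S)
    (hP : ∀ v ∈ varsP P, v < B) :
    (∃ g, (∀ v, v ∉ zs → g v = h v) ∧ UnifM M g P) ↔
    (∃ g, (∀ v, v ∉ zs.map (· + S) → g v = h v) ∧ UnifM M g (renP zs S P)) := by
  classical
  have hmem : ∀ w, w < S → w ∉ zs.map (· + S) := by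
    intro w hw hmem
    obtain ⟨u, _, hu⟩ := List.mem_map.1 hmem
    omega
  constructor
  · rintro ⟨g, hg, hu⟩
    refine ⟨fun u => if u ∈ zs.map (· + S) then g (u - S) else h u,
      fun v hv => if_neg hv, ?_⟩
    intro p hp
    obtain ⟨q, hq, hqe⟩ := List.mem_map.1 hp
    subst hqe
    show (q.1.applyT (renS zs S)).eval M _ = (q.2.applyT (renS zs S)).eval M _
    rw [eval_renS, eval_renS]
    have hagree : ∀ u : FOTerm L, u.vars ⊆ q.1.vars ∪ q.2.vars →
        (u.eval M fun w => if w ∈ zs then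
          (if w + S ∈ zs.map (· + S) then g (w + S - S) else h (w + S)) else
          (if w ∈ zs.map (· + S) then g (w - S) else h w)) = u.eval M g := by
      intro u hsub
      apply eval_agree
      intro w hw
      have hwB : w < B := hP w (mem_varsP.2 ⟨q, hq, Finset.mem_union.1 (hsub hw)⟩)
      by_cases hwz : w ∈ zs
      · rw [if_pos hwz, if_pos (List.mem_map.2 ⟨w, hwz, rfl⟩)]
        congr 1; omega
      · rw [if_neg hwz, if_neg (hmem w (by omega))]
        exact (hg w hwz).symm
    rw [hagree q.1 Finset.subset_union_left, hagree q.2 Finset.subset_union_right]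
    exact hu q hq
  · rintro ⟨g, hg, hu⟩
    refine ⟨fun w => if w ∈ zs then g (w + S) else h w, fun v hv => if_neg hv, ?_⟩
    intro q hq
    have := hu _ (List.mem_map.2 ⟨q, hq, rfl⟩)
    show q.1.eval M _ = q.2.eval M _
    have hagree : ∀ u : FOTerm L, u.vars ⊆ q.1.vars ∪ q.2.vars →
        u.eval M (fun w => if w ∈ zs then g (w + S) else h w)
          = (u.applyT (renS zs S)).eval M g := by
      intro u hsub
      rw [eval_renS]
      apply eval_agree
      intro w hw
      have hwB : w < B := hP w (mem_varsP.2 ⟨q, hq, Finset.mem_union.1 (hsub hw)⟩)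
      by_cases hwz : w ∈ zs
      · rw [if_pos hwz, if_pos hwz]
      · rw [if_neg hwz, if_neg hwz]
        exact (hg w (hmem w (by omega))).symm
    rw [hagree q.1 Finset.subset_union_left, hagree q.2 Finset.subset_union_right]
    exact this

/-- Bound used in the `and` case. -/
def andB (F G : FOForm L) (zp1 zp2 : List ℕ × List (FOTerm L × FOTerm L)) : ℕ :=
  bnd (F.fv ∪ G.fv ∪ varsP zp1.2 ∪ varsP zp2.2 ∪ zp1.1.toFinset ∪ zp2.1.toFinset)

def andData (F G : FOForm L) (zp1 zp2 : List ℕ × List (FOTerm L × FOTerm L)) :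
    List ℕ × List (FOTerm L × FOTerm L) :=
  (zp1.1.map (· + andB F G zp1 zp2) ++ zp2.1.map (· + 2 * andB F G zp1 zp2),
    renP zp1.1 (andB F G zp1 zp2) zp1.2 ++ renP zp2.1 (2 * andB F G zp1 zp2) zp2.2)

def prenexF : FOForm L → Option (List ℕ × List (FOTerm L × FOTerm L))
  | .tru => some ([], [])
  | .eq s t => some ([], [(s, t)])
  | .and F G =>
    match prenexF F, prenexF G with
    | some zp1, some zp2 => some (andData F G zp1 zp2)
    | _, _ => none
  | .ex x F => (prenexF F).map fun zp => (x :: zp.1, zp.2)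
  | _ => none

theorem prenexF_and (F G : FOForm L) : prenexF (.and F G) =
    match prenexF F, prenexF G with
    | some zp1, some zp2 => some (andData F G zp1 zp2)
    | _, _ => none := rfl

theorem prenexF_ex (x : ℕ) (F : FOForm L) :
    prenexF (.ex x F) = (prenexF F).map fun zp => (x :: zp.1, zp.2) := rfl

/-- The full characterization of prenexing. -/
theorem prenex_char {E : FOForm L} (hE : IsEQ E) :
    (prenexF E = none → ∀ (M : FOStruc L) (h : ℕ → M.carrier), ¬ ESat M h E) ∧
    (∀ zs P, prenexF E = some (zs, P) →
      (∀ v ∈ varsP P, v ∈ E.fv ∨ v ∈ zs) ∧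
      (∀ v ∈ zs, v ∉ E.fv) ∧
      (∀ (M : FOStruc L) (h : ℕ → M.carrier),
        ESat M h E ↔ ∃ g, (∀ v, v ∉ zs → g v = h v) ∧ UnifM M g P)) := by
  induction hE with
  | tru =>
    refine ⟨(fun h => by cases h), fun zs P hzp => ?_⟩
    cases hzp
    refine ⟨(fun v hv => by simp [varsP] at hv), (fun v hv => by cases hv), fun M h => ?_⟩
    constructor
    · intro _; exact ⟨h, fun _ _ => rfl, fun q hq => by cases hq⟩
    · intro _; trivial
  | fal =>
    refine ⟨(fun _ M h hs => hs), (fun zs P hzp => by cases hzp)⟩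
  | eq s t =>
    refine ⟨(fun h => by cases h), fun zs P hzp => ?_⟩
    cases hzp
    refine ⟨(fun v hv => ?_), (fun v hv => by cases hv), fun M h => ?_⟩
    · left
      simp only [varsP, Finset.union_empty, Finset.mem_union] at hv
      show v ∈ s.vars ∪ t.vars
      rw [Finset.mem_union]
      exact hv
    · constructor
      · intro hs
        exact ⟨h, fun _ _ => rfl, fun q hq => by
          rcases List.mem_cons.1 hq with hq | hq
          · subst hq; exact hs
          · cases hq⟩
      · rintro ⟨g, hg, hu⟩
        have : g = h := funext fun v => hg v (by simp)
        have := hu (s, t) (List.mem_cons_self)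
        rwa [‹g = h›] at this
  | @ex x F hF ih =>
    rw [prenexF_ex]
    cases hPF : prenexF F with
    | none =>
      refine ⟨(fun _ M h hs => ?_), fun zs P hzp => nomatch hzp⟩
      obtain ⟨d, hd⟩ := hs
      exact ih.1 hPF M _ hd
    | some zp =>
      obtain ⟨zs0, P0⟩ := zp
      obtain ⟨ha, hb, hc⟩ := ih.2 zs0 P0 hPF
      refine ⟨(fun h => nomatch h), fun zs P hzp => ?_⟩
      injection (Option.some.inj hzp) with h1 h2
      subst h1
      subst h2
      refine ⟨fun v hv => ?_, fun v hv => ?_, fun M h => ?_⟩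
      · rcases ha v hv with h1 | h1
        · by_cases hvx : v = x
          · right; rw [hvx]; exact List.mem_cons_self
          · left
            show v ∈ F.fv.erase x
            exact Finset.mem_erase.2 ⟨hvx, h1⟩
        · right; exact List.mem_cons_of_mem _ h1
      · rcases List.mem_cons.1 hv with h1 | h1
        · subst h1
          show v ∉ F.fv.erase v
          simp
        · intro hvfv
          exact hb v h1 (Finset.mem_of_mem_erase hvfv)
      · show (∃ d, ESat M (Function.update h x d) F) ↔ _
        constructor
        · rintro ⟨d, hd⟩
          obtain ⟨g, hg, hu⟩ := (hc M (Function.update h x d)).1 hd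
          refine ⟨g, fun v hv => ?_, hu⟩
          have hvx : v ≠ x := fun hh => hv (hh ▸ List.mem_cons_self (a := x))
          rw [hg v fun hh => hv (List.mem_cons_of_mem x hh), Function.update_of_ne hvx]
        · rintro ⟨g, hg, hu⟩
          refine ⟨g x, (hc M (Function.update h x (g x))).2 ⟨g, fun v hv => ?_, hu⟩⟩
          by_cases hvx : v = x
          · subst hvx; simp
          · rw [Function.update_of_ne hvx]
            exact hg v (by simp [hvx, hv])
  | @and F G hF hG ihF ihG =>
    rw [prenexF_and]
    cases hPF : prenexF F with
    | none =>
      refine ⟨(fun _ M h hs => ihF.1 hPF M h hs.1),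
        fun zs P hzp => nomatch hzp⟩
    | some zp1 =>
      cases hPG : prenexF G with
      | none =>
        refine ⟨(fun _ M h hs => ihG.1 hPG M h hs.2),
          fun zs P hzp => nomatch hzp⟩
      | some zp2 =>
        obtain ⟨zs1, P1⟩ := zp1
        obtain ⟨zs2, P2⟩ := zp2
        obtain ⟨ha1, hb1, hc1⟩ := ihF.2 zs1 P1 hPF
        obtain ⟨ha2, hb2, hc2⟩ := ihG.2 zs2 P2 hPG
        refine ⟨(fun h => nomatch h), fun zs P hzp => ?_⟩
        set B := andB F G (zs1, P1) (zs2, P2) with hBdef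
        have hzp' : andData F G (zs1, P1) (zs2, P2) = (zs, P) := Option.some.inj hzp
        have hz : zs = zs1.map (· + B) ++ zs2.map (· + 2 * B) :=
          (congrArg Prod.fst hzp').symm
        have hPe : P = renP zs1 B P1 ++ renP zs2 (2 * B) P2 :=
          (congrArg Prod.snd hzp').symm
        subst hz hPe
        have hBlt : ∀ v ∈ F.fv ∪ G.fv ∪ varsP P1 ∪ varsP P2
            ∪ zs1.toFinset ∪ zs2.toFinset, v < B := fun v hv => lt_bnd hv
        have hfvF : ∀ v ∈ F.fv, v < B := fun v hv => hBlt v (by simp [hv])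
        have hfvG : ∀ v ∈ G.fv, v < B := fun v hv => hBlt v (by simp [hv])
        have hP1 : ∀ v ∈ varsP P1, v < B := fun v hv => hBlt v (by simp [hv])
        have hP2 : ∀ v ∈ varsP P2, v < B := fun v hv => hBlt v (by simp [hv])
        have hzs1 : ∀ v ∈ zs1, v < B := fun v hv => hBlt v (by simp [hv])
        have hmem1 : ∀ v ∈ zs1.map (· + B), B ≤ v ∧ v < 2 * B := by
          intro v hv
          obtain ⟨w, hw, hwv⟩ := List.mem_map.1 hv
          have := hzs1 w hw
          omega
        have hmem2 : ∀ v ∈ zs2.map (· + 2 * B), 2 * B ≤ v := by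
          intro v hv
          obtain ⟨w, hw, hwv⟩ := List.mem_map.1 hv
          omega
        have hfv_and : (FOForm.and F G).fv = F.fv ∪ G.fv := rfl
        refine ⟨?_, ?_, ?_⟩
        · -- (a)
          intro v hv
          rw [varsP_append, Finset.mem_union] at hv
          rcases hv with hv | hv
          · rcases mem_varsP_renP hv with ⟨hvP, hvz⟩ | ⟨w, hwz, rfl⟩
            · rcases ha1 v hvP with h1 | h1
              · left; rw [hfv_and]; exact Finset.mem_union_left _ h1
              · exact absurd h1 hvz
            · right
              exact List.mem_append_left _ (List.mem_map.2 ⟨w, hwz, rfl⟩)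
          · rcases mem_varsP_renP hv with ⟨hvP, hvz⟩ | ⟨w, hwz, rfl⟩
            · rcases ha2 v hvP with h1 | h1
              · left; rw [hfv_and]; exact Finset.mem_union_right _ h1
              · exact absurd h1 hvz
            · right
              exact List.mem_append_right _ (List.mem_map.2 ⟨w, hwz, rfl⟩)
        · -- (b)
          intro v hv hvfv
          rw [hfv_and, Finset.mem_union] at hvfv
          have hvB : v < B := by
            rcases hvfv with h1 | h1
            · exact hfvF v h1
            · exact hfvG v h1
          rcases List.mem_append.1 hv with h1 | h1
          · have := hmem1 v h1; omega
          · have := hmem2 v h1; omega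
        · -- (c)
          intro M h
          show (ESat M h F ∧ ESat M h G) ↔ _
          rw [hc1 M h, hc2 M h, ren_bridge M h P1 zs1 B B le_rfl hP1,
            ren_bridge M h P2 zs2 B (2 * B) (by omega) hP2]
          constructor
          · rintro ⟨⟨g1, hg1, hu1⟩, ⟨g2, hg2, hu2⟩⟩
            refine ⟨fun v => if v ∈ zs1.map (· + B) then g1 v
              else if v ∈ zs2.map (· + 2 * B) then g2 v else h v, ?_, ?_⟩
            · intro v hv
              rw [List.mem_append] at hv
              push_neg at hv
              simp only [if_neg hv.1, if_neg hv.2]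
            · rw [unifM_append]
              constructor
              · refine (unifM_agree (g' := g1) ?_).2 hu1
                intro w hw
                rcases mem_varsP_renP hw with ⟨hwP, _⟩ | ⟨u, huz, rfl⟩
                · have hwB : w < B := hP1 w hwP
                  simp only [if_neg (fun hm => by have := hmem1 w hm; omega : w ∉ zs1.map (· + B)),
                    if_neg (fun hm => by have := hmem2 w hm; omega : w ∉ zs2.map (· + 2 * B))]
                  exact (hg1 w fun hm => by have := hmem1 w hm; omega).symm
                · simp only [if_pos (List.mem_map.2 ⟨u, huz, rfl⟩ : u + B ∈ zs1.map (· + B))]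
              · refine (unifM_agree (g' := g2) ?_).2 hu2
                intro w hw
                rcases mem_varsP_renP hw with ⟨hwP, _⟩ | ⟨u, huz, rfl⟩
                · have hwB : w < B := hP2 w hwP
                  simp only [if_neg (fun hm => by have := hmem1 w hm; omega : w ∉ zs1.map (· + B)),
                    if_neg (fun hm => by have := hmem2 w hm; omega : w ∉ zs2.map (· + 2 * B))]
                  exact (hg2 w fun hm => by have := hmem2 w hm; omega).symm
                · simp only [if_neg (fun hm => by have := hmem1 (u + 2 * B) hm; omega :
                      u + 2 * B ∉ zs1.map (· + B)),
                    if_pos (List.mem_map.2 ⟨u, huz, rfl⟩ : u + 2 * B ∈ zs2.map (· + 2 * B))]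
          · rintro ⟨g, hg, hu⟩
            rw [unifM_append] at hu
            constructor
            · refine ⟨fun v => if v ∈ zs1.map (· + B) then g v else h v,
                fun v hv => if_neg hv, ?_⟩
              refine (unifM_agree (g' := g) ?_).2 hu.1
              intro w hw
              rcases mem_varsP_renP hw with ⟨hwP, _⟩ | ⟨u, huz, rfl⟩
              · have hwB : w < B := hP1 w hwP
                simp only [if_neg (fun hm => by have := hmem1 w hm; omega : w ∉ zs1.map (· + B))]
                exact (hg w (by
                  intro hm
                  rcases List.mem_append.1 hm with h1 | h1
                  · have := hmem1 w h1; omega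
                  · have := hmem2 w h1; omega)).symm
              · simp only [if_pos (List.mem_map.2 ⟨u, huz, rfl⟩ : u + B ∈ zs1.map (· + B))]
            · refine ⟨fun v => if v ∈ zs2.map (· + 2 * B) then g v else h v,
                fun v hv => if_neg hv, ?_⟩
              refine (unifM_agree (g' := g) ?_).2 hu.2
              intro w hw
              rcases mem_varsP_renP hw with ⟨hwP, _⟩ | ⟨u, huz, rfl⟩
              · have hwB : w < B := hP2 w hwP
                simp only [if_neg (fun hm => by have := hmem2 w hm; omega : w ∉ zs2.map (· + 2 * B))]
                exact (hg w (by
                  intro hm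
                  rcases List.mem_append.1 hm with h1 | h1
                  · have := hmem1 w h1; omega
                  · have := hmem2 w h1; omega)).symm
              · simp only [if_pos (List.mem_map.2 ⟨u, huz, rfl⟩ : u + 2 * B ∈ zs2.map (· + 2 * B))]
/-! ### The characteristic substitution of an EQ-formula -/

theorem eq_dichotomy {E : FOForm L} (hE : IsEQ E) :
    (∀ M : FOStruc L, IsFEA M → ∀ h, ¬ ESat M h E) ∨
    ∃ σ : FinSubst L, ∀ M : FOStruc L, IsFEA M → ∀ h, (ESat M h E ↔ h ∈ σ.Inst M) := by
  classical
  cases hP : prenexF E with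
  | none => exact Or.inl fun M _ h => (prenex_char hE).1 hP M h
  | some zp =>
    obtain ⟨zs, P⟩ := zp
    obtain ⟨ha, hb, hc⟩ := (prenex_char hE).2 zs P hP
    rcases mgu_main (varsP P).card (sizeP P) (badP P) P le_rfl le_rfl le_rfl with
      hl | ⟨τ, h1, h2, h3⟩
    · refine Or.inl fun M hM h hs => ?_
      obtain ⟨g, hg, hu⟩ := (hc M h).1 hs
      exact hl M hM g hu
    · refine Or.inr ⟨⟨E.fv,
        fun v => if v ∈ E.fv then (if v ∈ varsP P then τ v else .var v) else .var v,
        fun v hv => by simp only [if_neg hv]⟩, ?_⟩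
      intro M hM h
      rw [hc M h]
      constructor
      · rintro ⟨g, hg, hu⟩
        obtain ⟨γ, hγ⟩ := (h3 M hM g).1 hu
        refine ⟨fun u => if u ∈ varsP P then γ u else h u, fun v hv => ?_⟩
        show h v = ((if v ∈ E.fv then (if v ∈ varsP P then τ v else FOTerm.var v)
          else FOTerm.var v) : FOTerm L).eval M _
        rw [if_pos hv]
        by_cases hvP : v ∈ varsP P
        · rw [if_pos hvP]
          have hvz : v ∉ zs := fun hz => hb v hz hv
          rw [(hg v hvz).symm, hγ v hvP]
          apply eval_agree
          intro u hu'
          have huP : u ∈ varsP P := h2 v hvP hu'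
          rw [if_pos huP]
        · rw [if_neg hvP]
          show h v = (if v ∈ varsP P then γ v else h v)
          rw [if_neg hvP]
      · rintro ⟨γ, hγ⟩
        refine ⟨fun v => if v ∈ zs then
          ((if v ∈ varsP P then τ v else FOTerm.var v).eval M γ) else h v,
          fun v hv => if_neg hv, ?_⟩
        apply (h3 M hM _).2
        refine ⟨γ, fun v hvP => ?_⟩
        by_cases hvz : v ∈ zs
        · show (if v ∈ zs then
            ((if v ∈ varsP P then τ v else FOTerm.var v).eval M γ) else h v) = _
          rw [if_pos hvz, if_pos hvP]
        · show (if v ∈ zs then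
            ((if v ∈ varsP P then τ v else FOTerm.var v).eval M γ) else h v) = _
          rw [if_neg hvz]
          have hvfv : v ∈ E.fv := by
            rcases ha v hvP with h' | h'
            · exact h'
            · exact absurd h' hvz
          have := hγ v hvfv
          simp only [if_pos hvfv, if_pos hvP] at this
          exact this

open Classical in
/-- The characteristic substitution (or `⊥`) of a formula. -/
noncomputable def NE (E : FOForm L) : Option (FinSubst L) :=
  if h : ∃ σ : FinSubst L, ∀ M : FOStruc L, IsFEA M → ∀ hh, (ESat M hh E ↔ hh ∈ σ.Inst M)
  then some h.choose else none

theorem NE_some {E : FOForm L} {σ : FinSubst L} (h : NE E = some σ) :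
    ∀ M : FOStruc L, IsFEA M → ∀ hh, (ESat M hh E ↔ hh ∈ σ.Inst M) := by
  classical
  unfold NE at h
  split at h
  · rename_i hex
    cases h
    exact hex.choose_spec
  · cases h

theorem NE_none {E : FOForm L} (hE : IsEQ E) (h : NE E = none) :
    ∀ M : FOStruc L, IsFEA M → ∀ hh, ¬ ESat M hh E := by
  classical
  rcases eq_dichotomy hE with hl | ⟨σ, hσ⟩
  · exact hl
  · exfalso
    unfold NE at h
    split at h
    · cases h
    · rename_i hex
      exact hex ⟨σ, hσ⟩

theorem KInv_NE {E : FOForm L} (hE : IsEQ E) :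
    KInv (NE E) = { h | ESat (TM L) h E } := by
  cases hNE : NE E with
  | none =>
    ext h
    simp only [KInv, Set.mem_empty_iff_false, Set.mem_setOf_eq, false_iff]
    exact NE_none hE hNE (TM L) isFEA_TM h
  | some σ =>
    ext h
    simp only [KInv, Set.mem_setOf_eq]
    exact (NE_some hNE (TM L) isFEA_TM h).symm

/-- The master order lemma. -/
theorem eqle_iff_KInv {E F : FOForm L} (hE : IsEQ E) (hF : IsEQ F) :
    EQle E F ↔ KInv (NE E) ⊆ KInv (NE F) := by
  constructor
  · intro hle h hh
    rw [KInv_NE hE] at hh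
    rw [KInv_NE hF]
    exact hle (TM L) isFEA_TM h hh
  · intro hsub M hM h hh
    cases hNE : NE E with
    | none => exact absurd hh (NE_none hE hNE M hM h)
    | some σE =>
      have hh' : h ∈ σE.Inst M := (NE_some hNE M hM h).1 hh
      cases hNF : NE F with
      | none =>
        exfalso
        rw [hNE, hNF] at hsub
        obtain ⟨x, hx⟩ := inst_nonempty σE
        exact Set.notMem_empty x (hsub hx)
      | some σF =>
        have hsub' : σE.Inst (TM L) ⊆ σF.Inst (TM L) := by
          rw [hNE, hNF] at hsub
          exact hsub
        exact (NE_some hNF M hM h).2 (inst_mono_of_TM hsub' M hh')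

/-! ### The formula attached to a substitution -/

def sbnd (σ : FinSubst L) : ℕ := bnd (σ.dom ∪ σ.range)

def eqsOfS (σ : FinSubst L) : List (ℕ × FOTerm L) :=
  (σ.dom.sort (· ≤ ·)).map fun x => (x, (σ.map x).applyT fun v => .var (v + sbnd σ))

def zsOfS (σ : FinSubst L) : List ℕ := (σ.range.sort (· ≤ ·)).map (· + sbnd σ)

def formOfS (σ : FinSubst L) : FOForm L := exOf (zsOfS σ) (conjOf (eqsOfS σ))

theorem isEQ_formOfS (σ : FinSubst L) : IsEQ (formOfS σ) :=
  isEQ_exOf _ (isEQ_conjOf _)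

theorem formOfS_char (σ : FinSubst L) (M : FOStruc L) (h : ℕ → M.carrier) :
    ESat M h (formOfS σ) ↔ h ∈ σ.Inst M := by
  classical
  have hdlt : ∀ x ∈ σ.dom, x < sbnd σ := fun x hx => lt_bnd (by simp [hx])
  have hrlt : ∀ v ∈ σ.range, v < sbnd σ := fun v hv => lt_bnd (by simp [hv])
  have hzge : ∀ u ∈ zsOfS σ, sbnd σ ≤ u := by
    intro u hu
    obtain ⟨w, _, hw⟩ := List.mem_map.1 hu
    omega
  rw [formOfS, exOf_bridge]
  constructor
  · rintro ⟨g, hg, hs⟩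
    rw [conjOf_bridge] at hs
    refine ⟨fun v => g (v + sbnd σ), fun x hx => ?_⟩
    have hmem : (x, (σ.map x).applyT fun v => FOTerm.var (v + sbnd σ)) ∈ eqsOfS σ :=
      List.mem_map.2 ⟨x, (Finset.mem_sort _).2 hx, rfl⟩
    have hp := hs _ hmem
    have hgx : g x = h x := hg x fun hz => by have := hzge x hz; have := hdlt x hx; omega
    rw [← hgx, hp, eval_applyT]
    rfl
  · rintro ⟨γ, hγ⟩
    refine ⟨fun u => if u ∈ zsOfS σ then γ (u - sbnd σ) else h u,
      fun v hv => if_neg hv, ?_⟩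
    rw [conjOf_bridge]
    intro p hp
    obtain ⟨x, hx, rfl⟩ := List.mem_map.1 hp
    have hxd : x ∈ σ.dom := (Finset.mem_sort _).1 hx
    show (if x ∈ zsOfS σ then _ else h x) = _
    rw [if_neg fun hz => by have := hzge x hz; have := hdlt x hxd; omega]
    rw [hγ x hxd, eval_applyT]
    apply eval_agree
    intro v hv
    have hvr : v ∈ σ.range := Finset.mem_biUnion.2 ⟨x, hxd, hv⟩
    have hvz : v + sbnd σ ∈ zsOfS σ :=
      List.mem_map.2 ⟨v, (Finset.mem_sort _).2 hvr, rfl⟩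
    show γ v = (if v + sbnd σ ∈ zsOfS σ then γ (v + sbnd σ - sbnd σ) else h (v + sbnd σ))
    rw [if_pos hvz]
    congr 1
    omega
/-! ### Finiteness of intervals -/

/-- Function symbols occurring in a term. -/
def fsyms : FOTerm L → Set L.Func
  | .var _ => ∅
  | .func f ts => insert f (⋃ i, fsyms (ts i))

theorem fsyms_finite (t : FOTerm L) : (fsyms t).Finite := by
  induction t with
  | var x => exact Set.finite_empty
  | func f ts ih =>
    exact Set.Finite.insert f (Set.finite_iUnion ih)

theorem fsyms_applyT_mono (g : ℕ → FOTerm L) (t : FOTerm L) :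
    fsyms t ⊆ fsyms (t.applyT g) := by
  induction t with
  | var x => exact Set.empty_subset _
  | func f ts ih =>
    intro a ha
    rcases Set.mem_insert_iff.1 ha with ha | ha
    · exact Set.mem_insert_iff.2 (Or.inl ha)
    · obtain ⟨i, hi⟩ := Set.mem_iUnion.1 ha
      exact Set.mem_insert_iff.2 (Or.inr (Set.mem_iUnion.2 ⟨i, ih i hi⟩))

theorem fsyms_ren (ρ : ℕ → ℕ) (t : FOTerm L) :
    fsyms (t.applyT fun v => .var (ρ v)) = fsyms t := by
  induction t with
  | var x => rfl
  | func f ts ih =>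
    show insert f _ = insert f _
    congr 1
    exact Set.iUnion_congr ih

theorem card_vars_le_tsize (t : FOTerm L) : t.vars.card ≤ tsize t := by
  induction t with
  | var x => simp [FOTerm.vars, tsize]
  | func f ts ih =>
    calc (FOTerm.vars (.func f ts)).card
        ≤ Finset.univ.sum fun i => (ts i).vars.card := Finset.card_biUnion_le
      _ ≤ Finset.univ.sum fun i => tsize (ts i) := Finset.sum_le_sum fun i _ => ih i
      _ ≤ tsize (.func f ts) := by simp [tsize]

/-- Terms of bounded size with bounded symbols and variables form a finite set. -/
theorem terms_finite (F : Set L.Func) (hF : F.Finite) (V : Finset ℕ) :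
    ∀ n : ℕ, { t : FOTerm L | tsize t ≤ n ∧ fsyms t ⊆ F ∧ t.vars ⊆ V }.Finite := by
  intro n
  induction n with
  | zero =>
    convert Set.finite_empty
    ext t
    simp only [Set.mem_setOf_eq, Set.mem_empty_iff_false, iff_false, not_and]
    intro h
    exact absurd h (by have := tsize_pos t; omega)
  | succ n ih =>
    have hsub : { t : FOTerm L | tsize t ≤ n + 1 ∧ fsyms t ⊆ F ∧ t.vars ⊆ V } ⊆
        ((fun v => (FOTerm.var v : FOTerm L)) '' ↑V) ∪
        ⋃ f ∈ F, (fun ts => (FOTerm.func f ts : FOTerm L)) ''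
          (Set.pi Set.univ fun _ : Fin (L.farity f) =>
            { t : FOTerm L | tsize t ≤ n ∧ fsyms t ⊆ F ∧ t.vars ⊆ V }) := by
      rintro t ⟨hs, hf, hv⟩
      cases t with
      | var x =>
        left
        exact ⟨x, hv (by simp [FOTerm.vars]), rfl⟩
      | func f ts =>
        right
        refine Set.mem_biUnion (hf (Set.mem_insert f _)) ⟨ts, fun i _ => ⟨?_, ?_, ?_⟩, rfl⟩
        · have h1 : tsize (ts i) ≤ Finset.univ.sum fun j => tsize (ts j) :=
            Finset.single_le_sum (f := fun j => tsize (ts j))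
              (fun j _ => Nat.zero_le _) (Finset.mem_univ i)
          have h2 : tsize (FOTerm.func f ts) = 1 + Finset.univ.sum fun j => tsize (ts j) := rfl
          omega
        · intro a ha
          exact hf (Set.mem_insert_iff.2 (Or.inr (Set.mem_iUnion.2 ⟨i, ha⟩)))
        · intro v hvv
          exact hv (by
            show v ∈ Finset.univ.biUnion fun j => (ts j).vars
            exact Finset.mem_biUnion.2 ⟨i, Finset.mem_univ i, hvv⟩)
    refine Set.Finite.subset (Set.Finite.union ((V.finite_toSet).image _)
      (Set.Finite.biUnion hF fun f _ => Set.Finite.image _ (Set.Finite.pi fun _ => ih))) hsub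

/-- Renaming of range variables preserves instance sets. -/
def renSub (θ : FinSubst L) (ρ : ℕ → ℕ) : FinSubst L :=
  ⟨θ.dom, fun x => if x ∈ θ.dom then (θ.map x).applyT (fun v => .var (ρ v)) else .var x,
    fun x hx => by simp only [if_neg hx]⟩

theorem inst_renSub (θ : FinSubst L) (ρ : ℕ → ℕ) (hinj : Set.InjOn ρ ↑θ.range)
    (M : FOStruc L) : (renSub θ ρ).Inst M = θ.Inst M := by
  classical
  ext h
  constructor
  · rintro ⟨γ, hγ⟩
    refine ⟨fun v => γ (ρ v), fun x hx => ?_⟩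
    have := hγ x hx
    simp only [renSub, if_pos hx] at this
    rw [this, eval_applyT]
    rfl
  · rintro ⟨γ, hγ⟩
    refine ⟨fun u => if hu : ∃ v ∈ θ.range, ρ v = u then γ hu.choose else γ u,
      fun x hx => ?_⟩
    have hx' : x ∈ θ.dom := hx
    show h x = ((if x ∈ θ.dom then (θ.map x).applyT (fun v => FOTerm.var (ρ v))
      else FOTerm.var x) : FOTerm L).eval M _
    rw [if_pos hx', eval_applyT, hγ x hx']
    apply eval_agree
    intro v hv
    have hvr : v ∈ θ.range := Finset.mem_biUnion.2 ⟨x, hx, hv⟩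
    have hex : ∃ w ∈ θ.range, ρ w = ρ v := ⟨v, hvr, rfl⟩
    show γ v = (if hu : ∃ w ∈ θ.range, ρ w = ρ v then γ hu.choose else γ (ρ v))
    rw [dif_pos hex]
    congr 1
    exact (hinj hex.choose_spec.1 hvr hex.choose_spec.2).symm

theorem applyT_eq_var {u : FOTerm L} {g : ℕ → FOTerm L} {a : ℕ}
    (h : u.applyT g = .var a) : ∃ w, u = .var w ∧ g w = .var a := by
  cases u with
  | var w => exact ⟨w, rfl, h⟩
  | func f ts => exact absurd h (by simp [FOTerm.applyT])

/-- Dropping the bindings outside `ς.dom` preserves the instance set,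
provided the instance set contains the generic instance of `ς`. -/
theorem inst_restrict (ς θ : FinSubst L)
    (hsub : ς.Inst (TM L) ⊆ θ.Inst (TM L)) :
    (θ.restrict ↑ς.dom).Inst (TM L) = θ.Inst (TM L) := by
  classical
  set B := bnd (avars ς θ) with hBdef
  have hB : ∀ v ∈ avars ς θ, v < B := fun v hv => lt_bnd hv
  obtain ⟨γ, hγ⟩ := hsub (hstar_mem ς B)
  simp only [TM_eval] at hγ
  have hres_mem : ∀ x, x ∈ (θ.restrict ↑ς.dom).dom ↔ x ∈ θ.dom ∧ x ∈ ς.dom := by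
    intro x
    simp [FinSubst.restrict]
  have hres_map : ∀ x ∈ θ.dom, x ∈ ς.dom → (θ.restrict ↑ς.dom).map x = θ.map x := by
    intro x hx hxς
    simp only [FinSubst.restrict]
    rw [if_pos ⟨hx, Finset.mem_coe.2 hxς⟩]
  -- For x ∈ θ.dom \ ς.dom the binding is a variable not occurring elsewhere
  have hnew : ∀ x ∈ θ.dom, x ∉ ς.dom →
      ∃ u, θ.map x = .var u ∧ γ u = .var x := by
    intro x hx hxς
    have h1 := hγ x hx
    simp only [hstar, if_neg hxς] at h1
    obtain ⟨w, hw1, hw2⟩ := applyT_eq_var h1.symm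
    exact ⟨w, hw1, hw2⟩
  ext h
  constructor
  · rintro ⟨γ₀, hγ₀⟩
    choose u hu1 hu2 using hnew
    refine ⟨fun w => if hw : ∃ x, ∃ hx : x ∈ θ.dom, ∃ hxς : x ∉ ς.dom,
        u x hx hxς = w then h hw.choose else γ₀ w, fun x hx => ?_⟩
    by_cases hxς : x ∈ ς.dom
    · have hmain := hγ₀ x ((hres_mem x).2 ⟨hx, hxς⟩)
      rw [hres_map x hx hxς] at hmain
      rw [hmain]
      apply eval_agree
      intro v hv
      have hnv : ¬ ∃ xx, ∃ hxx : xx ∈ θ.dom, ∃ hxxς : xx ∉ ς.dom, u xx hxx hxxς = v := by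
        rintro ⟨y, hy, hyς, hyu⟩
        have hvy : (γ v).vars ⊆ ((θ.map x).applyT γ).vars := by
          rw [vars_applyT]
          intro a ha
          exact Finset.mem_biUnion.2 ⟨v, hv, ha⟩
        rw [← hγ x hx] at hvy
        have hy2 : y ∈ (γ v).vars := by
          rw [← hyu, hu2 y hy hyς]
          simp [FOTerm.vars]
        have hy3 : y ∈ (hstar ς B x).vars := hvy hy2
        simp only [hstar, if_pos hxς] at hy3
        rw [vars_applyT] at hy3
        obtain ⟨w, _, hw⟩ := Finset.mem_biUnion.1 hy3
        simp only [FOTerm.vars, Finset.mem_singleton] at hw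
        have hyB : y < B := hB y (by simp [avars, hy])
        omega
      rw [dif_neg hnv]
    · -- a dropped binding
      obtain ⟨hex⟩ : Nonempty (∃ xx, ∃ hxx : xx ∈ θ.dom, ∃ hxxς : xx ∉ ς.dom,
          u xx hxx hxxς = u x hx hxς) := ⟨⟨x, hx, hxς, rfl⟩⟩
      rw [hu1 x hx hxς]
      show h x = (if hw : ∃ xx, ∃ hxx : xx ∈ θ.dom, ∃ hxxς : xx ∉ ς.dom,
        u xx hxx hxxς = u x hx hxς then h hw.choose else γ₀ (u x hx hxς))
      rw [dif_pos hex]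
      congr 1
      -- injectivity of the u's
      obtain ⟨hx', hxς', hu'⟩ := hex.choose_spec
      have h1 : γ (u hex.choose hx' hxς') = .var hex.choose := hu2 _ _ _
      have h2 : γ (u x hx hxς) = .var x := hu2 _ _ _
      rw [hu'] at h1
      rw [h1] at h2
      exact (FOTerm.var.inj h2).symm
  · rintro ⟨γ₀, hγ₀⟩
    refine ⟨γ₀, fun x hx => ?_⟩
    obtain ⟨hx1, hx2⟩ := (hres_mem x).1 hx
    rw [hres_map x hx1 hx2]
    exact hγ₀ x hx1

/-- Size bound for subsumed bindings. -/
theorem bindings_bounded (ς θ : FinSubst L)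
    (hsub : ς.Inst (TM L) ⊆ θ.Inst (TM L)) :
    ∀ x ∈ θ.dom, x ∈ ς.dom →
      tsize (θ.map x) ≤ tsize (ς.map x) ∧ fsyms (θ.map x) ⊆ fsyms (ς.map x) := by
  set B := bnd (avars ς θ) with hBdef
  obtain ⟨γ, hγ⟩ := hsub (hstar_mem ς B)
  simp only [TM_eval] at hγ
  intro x hx hxς
  have h1 := hγ x hx
  simp only [hstar, if_pos hxς] at h1
  constructor
  · calc tsize (θ.map x) ≤ tsize ((θ.map x).applyT γ) := tsize_le_applyT _ _
      _ = tsize ((ς.map x).applyT fun v => .var (v + B)) := by rw [← h1]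
      _ = tsize (ς.map x) := tsize_applyT_renaming _ _
  · intro a ha
    have h2 : a ∈ fsyms ((θ.map x).applyT γ) := fsyms_applyT_mono γ _ ha
    rw [← h1] at h2
    rwa [fsyms_ren (fun v => v + B) (ς.map x)] at h2
def maxS (ς : FinSubst L) : ℕ := ς.dom.sup fun x => tsize (ς.map x)
def sumS (ς : FinSubst L) : ℕ := ς.dom.sum fun x => tsize (ς.map x)
def allF (ς : FinSubst L) : Set L.Func := ⋃ x ∈ (↑ς.dom : Set ℕ), fsyms (ς.map x)

theorem allF_finite (ς : FinSubst L) : (allF ς).Finite :=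
  Set.Finite.biUnion ς.dom.finite_toSet fun x _ => fsyms_finite _

def TSet (ς : FinSubst L) : Set (FinSubst L) :=
  { θ | θ.dom ⊆ ς.dom ∧ ∀ x ∈ θ.dom, tsize (θ.map x) ≤ maxS ς ∧
      fsyms (θ.map x) ⊆ allF ς ∧ (θ.map x).vars ⊆ Finset.range (sumS ς) }

theorem TSet_finite (ς : FinSubst L) : (TSet ς).Finite := by
  classical
  set Box : Set (FOTerm L) := { t | tsize t ≤ maxS ς ∧ fsyms t ⊆ allF ς ∧
    t.vars ⊆ Finset.range (sumS ς) } with hBoxdef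
  have hBox : Box.Finite := terms_finite _ (allF_finite ς) _ _
  apply Set.Finite.of_finite_image
    (f := fun θ : FinSubst L => (θ.dom, fun x : {y // y ∈ ς.dom} => θ.map x.1))
  · apply Set.Finite.subset (Set.Finite.prod (ς.dom.powerset.finite_toSet)
      (Set.Finite.pi fun x : {y // y ∈ ς.dom} =>
        hBox.union (Set.finite_singleton (.var x.1))))
    rintro p ⟨θ, hθ, rfl⟩
    constructor
    · exact Finset.mem_coe.2 (Finset.mem_powerset.2 hθ.1)
    · intro x _
      by_cases hx : x.1 ∈ θ.dom
      · exact Set.mem_union_left _ (hθ.2 x.1 hx)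
      · right
        show θ.map x.1 ∈ {FOTerm.var x.1}
        rw [θ.outside x.1 hx]
        exact rfl
  · intro θ₁ h1 θ₂ h2 hj
    have hd : θ₁.dom = θ₂.dom := congrArg Prod.fst hj
    have hm := congrArg Prod.snd hj
    apply FinSubst.ext' hd
    funext n
    by_cases hn : n ∈ ς.dom
    · exact congrFun hm ⟨n, hn⟩
    · rw [θ₁.outside n fun hh => hn (h1.1 hh), θ₂.outside n fun hh => hn (h2.1 hh)]

theorem exists_canon (ς θ : FinSubst L) (hsub : ς.Inst (TM L) ⊆ θ.Inst (TM L)) :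
    ∃ θc ∈ TSet ς, θc.Inst (TM L) = θ.Inst (TM L) := by
  classical
  set θ₁ := θ.restrict ↑ς.dom with hθ₁def
  have hInst1 : θ₁.Inst (TM L) = θ.Inst (TM L) := inst_restrict ς θ hsub
  have hmem : ∀ x, x ∈ θ₁.dom ↔ x ∈ θ.dom ∧ x ∈ ς.dom := by
    intro x
    simp [hθ₁def, FinSubst.restrict]
  have hmap : ∀ x ∈ θ₁.dom, θ₁.map x = θ.map x := by
    intro x hx
    obtain ⟨h1, h2⟩ := (hmem x).1 hx
    simp only [hθ₁def, FinSubst.restrict]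
    rw [if_pos ⟨h1, Finset.mem_coe.2 h2⟩]
  set ρ : ℕ → ℕ := fun v => (θ₁.range.sort (· ≤ ·)).idxOf v with hρdef
  have hinj : Set.InjOn ρ ↑θ₁.range := by
    intro a ha b hb hab
    have hma : a ∈ θ₁.range.sort (· ≤ ·) := (Finset.mem_sort _).2 ha
    have hmb : b ∈ θ₁.range.sort (· ≤ ·) := (Finset.mem_sort _).2 hb
    exact (List.idxOf_inj hma).1 hab
  have hcard : θ₁.range.card ≤ sumS ς := by
    calc θ₁.range.card ≤ θ₁.dom.sum fun x => ((θ₁.map x).vars).card :=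
          Finset.card_biUnion_le
      _ ≤ θ₁.dom.sum fun x => tsize (θ₁.map x) :=
          Finset.sum_le_sum fun x _ => card_vars_le_tsize _
      _ ≤ θ₁.dom.sum fun x => tsize (ς.map x) := by
          apply Finset.sum_le_sum
          intro x hx
          obtain ⟨h1, h2⟩ := (hmem x).1 hx
          rw [hmap x hx]
          exact (bindings_bounded ς θ hsub x h1 h2).1
      _ ≤ sumS ς := Finset.sum_le_sum_of_subset fun x hx => ((hmem x).1 hx).2
  have hρlt : ∀ v ∈ θ₁.range, ρ v < sumS ς := by
    intro v hv
    have : ρ v < (θ₁.range.sort (· ≤ ·)).length :=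
      List.idxOf_lt_length_iff.2 ((Finset.mem_sort _).2 hv)
    rw [Finset.length_sort] at this
    omega
  refine ⟨renSub θ₁ ρ, ⟨?_, ?_⟩, ?_⟩
  · intro x hx
    exact ((hmem x).1 hx).2
  · intro x hx
    have hx1 : x ∈ θ₁.dom := hx
    obtain ⟨hxθ, hxς⟩ := (hmem x).1 hx1
    have hrmap : (renSub θ₁ ρ).map x = (θ.map x).applyT fun v => .var (ρ v) := by
      simp only [renSub]
      rw [if_pos hx1, hmap x hx1]
    obtain ⟨hbd1, hbd2⟩ := bindings_bounded ς θ hsub x hxθ hxς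
    refine ⟨?_, ?_, ?_⟩
    · rw [hrmap, tsize_applyT_renaming]
      exact le_trans hbd1 (Finset.le_sup (f := fun y => tsize (ς.map y)) hxς)
    · rw [hrmap, fsyms_ren]
      exact subset_trans hbd2 (Set.subset_biUnion_of_mem
        (u := fun y => fsyms (ς.map y)) (Finset.mem_coe.2 hxς))
    · rw [hrmap, vars_applyT]
      intro v hv
      obtain ⟨w, hw, hvw⟩ := Finset.mem_biUnion.1 hv
      simp only [FOTerm.vars, Finset.mem_singleton] at hvw
      subst hvw
      have hwr : w ∈ θ₁.range := Finset.mem_biUnion.2 ⟨x, hx1, by rw [hmap x hx1]; exact hw⟩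
      exact Finset.mem_range.2 (hρlt w hwr)
  · rw [inst_renSub θ₁ ρ hinj, hInst1]

/-! ### The quotient orders -/

theorem KInv_congr {a b : Option (FinSubst L)} (h : EquivBot a b) : KInv a = KInv b :=
  Set.Subset.antisymm ((leBot_iff_KInv a b).1 h.1) ((leBot_iff_KInv b a).1 h.2)

def KInvQ : SubstQuot L → Set (ℕ → FOTerm L) :=
  Quot.lift KInv fun _ _ h => KInv_congr h

theorem KInvQ_mk (s : Option (FinSubst L)) :
    KInvQ (Quot.mk (EquivBot (L := L)) s) = KInv s := rfl

theorem substQuotLe_iff (a b : SubstQuot L) : SubstQuotLe a b ↔ KInvQ a ⊆ KInvQ b := by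
  constructor
  · rintro ⟨s, t, rfl, rfl, hst⟩
    exact (leBot_iff_KInv s t).1 hst
  · intro hsub
    obtain ⟨s, hs⟩ := Quot.exists_rep a
    obtain ⟨t, ht⟩ := Quot.exists_rep b
    refine ⟨s, t, hs, ht, (leBot_iff_KInv s t).2 ?_⟩
    rw [← KInvQ_mk s, ← KInvQ_mk t, hs, ht]
    exact hsub

theorem substQuot_ext {a b : SubstQuot L} (h : KInvQ a = KInvQ b) : a = b := by
  obtain ⟨s, hs⟩ := Quot.exists_rep a
  obtain ⟨t, ht⟩ := Quot.exists_rep b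
  rw [← hs, ← ht]
  apply Quot.sound
  have : KInv s = KInv t := by
    rw [← KInvQ_mk s, ← KInvQ_mk t, hs, ht, h]
  exact ⟨(leBot_iff_KInv s t).2 (le_of_eq this), (leBot_iff_KInv t s).2 (ge_of_eq this)⟩

theorem interval_finite (ς : FinSubst L) :
    { d : SubstQuot L | SubstQuotLe (Quot.mk _ (some ς)) d }.Finite := by
  apply Set.Finite.subset ((TSet_finite ς).image fun θ => Quot.mk (EquivBot) (some θ))
  intro d hd
  have hd' : SubstQuotLe (Quot.mk _ (some ς)) d := hd
  replace hd' := (substQuotLe_iff _ _).1 hd'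
  obtain ⟨s, hs⟩ := Quot.exists_rep d
  cases s with
  | none =>
    exfalso
    rw [← hs] at hd'
    exact Set.notMem_empty _ (hd' (hstar_mem ς 0))
  | some θ =>
    have hsub : ς.Inst (TM L) ⊆ θ.Inst (TM L) := by
      rw [← hs] at hd'
      exact hd'
    obtain ⟨θc, hθc, hI⟩ := exists_canon ς θ hsub
    refine ⟨θc, hθc, ?_⟩
    apply substQuot_ext
    rw [KInvQ_mk, ← hs, KInvQ_mk]
    exact hI
/-! ### The isomorphism and the lattice -/

noncomputable def PhiF : EQQuot L → SubstQuot L :=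
  Quot.lift (fun E => Quot.mk _ (NE E.1)) (by
    intro E F h
    apply Quot.sound
    have hK : KInv (NE E.1) = KInv (NE F.1) := by
      rw [KInv_NE E.2, KInv_NE F.2]
      ext hh
      exact ⟨fun hs => h.1 (TM L) isFEA_TM hh hs, fun hs => h.2 (TM L) isFEA_TM hh hs⟩
    exact ⟨(leBot_iff_KInv _ _).2 hK.le, (leBot_iff_KInv _ _).2 hK.ge⟩)

theorem KInvQ_PhiF (E : EQSub L) :
    KInvQ (PhiF (Quot.mk _ E)) = { h | ESat (TM L) h E.1 } := KInv_NE E.2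

noncomputable def repS (a : SubstQuot L) : Option (FinSubst L) := (Quot.exists_rep a).choose

theorem repS_spec (a : SubstQuot L) : Quot.mk _ (repS a) = a := (Quot.exists_rep a).choose_spec

noncomputable def meetO : Option (FinSubst L) → Option (FinSubst L) → Option (FinSubst L)
  | some σ, some θ => NE (.and (formOfS σ) (formOfS θ))
  | _, _ => none

theorem KInv_meetO (s t : Option (FinSubst L)) : KInv (meetO s t) = KInv s ∩ KInv t := by
  cases s with
  | none => exact (Set.empty_inter _).symm
  | some σ =>
    cases t with
    | none => exact (Set.inter_empty _).symm
    | some θ =>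
      show KInv (NE (.and (formOfS σ) (formOfS θ))) = _
      rw [KInv_NE (IsEQ.and (isEQ_formOfS σ) (isEQ_formOfS θ))]
      ext h
      show ESat (TM L) h (.and (formOfS σ) (formOfS θ)) ↔ _
      show (ESat (TM L) h (formOfS σ) ∧ ESat (TM L) h (formOfS θ)) ↔ _
      rw [formOfS_char, formOfS_char]
      exact Iff.rfl

noncomputable def meetQ (a b : SubstQuot L) : SubstQuot L :=
  Quot.mk _ (meetO (repS a) (repS b))

theorem KInvQ_meetQ (a b : SubstQuot L) : KInvQ (meetQ a b) = KInvQ a ∩ KInvQ b := by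
  show KInv (meetO (repS a) (repS b)) = _
  rw [KInv_meetO]
  rw [← KInvQ_mk (repS a), ← KInvQ_mk (repS b), repS_spec, repS_spec]

def topS (L : FOLang) : SubstQuot L := Quot.mk _ (some (FinSubst.empty L))
def botS (L : FOLang) : SubstQuot L := Quot.mk _ (none : Option (FinSubst L))

theorem KInvQ_topS : KInvQ (topS L) = Set.univ := by
  show FinSubst.Inst (TM L) (FinSubst.empty L) = Set.univ
  ext h
  simp only [Set.mem_univ, iff_true]
  exact ⟨fun v => .var v, fun x hx => absurd hx (Finset.notMem_empty x)⟩

theorem KInvQ_botS : KInvQ (botS L) = ∅ := rfl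

noncomputable def foldMeetAux (l : List (SubstQuot L)) : SubstQuot L := l.foldr meetQ (topS L)

theorem KInvQ_fold (l : List (SubstQuot L)) :
    KInvQ (foldMeetAux l) = { x | ∀ d ∈ l, x ∈ KInvQ d } := by
  induction l with
  | nil =>
    show KInvQ (topS L) = _
    rw [KInvQ_topS]
    ext x
    simp
  | cons d l ih =>
    show KInvQ (meetQ d (foldMeetAux l)) = _
    rw [KInvQ_meetQ, ih]
    ext x
    simp only [Set.mem_inter_iff, Set.mem_setOf_eq, List.mem_cons]
    constructor
    · rintro ⟨h1, h2⟩ e (he | he)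
      · subst he; exact h1
      · exact h2 e he
    · intro hh
      exact ⟨hh d (Or.inl rfl), fun e he => hh e (Or.inr he)⟩

open Classical in
noncomputable def sInfS (S : Set (SubstQuot L)) : SubstQuot L :=
  if h : ∃ ς : FinSubst L, ∀ d ∈ S, SubstQuotLe (Quot.mk _ (some ς)) d then
    foldMeetAux (Set.Finite.toFinset
      (Set.Finite.subset (interval_finite h.choose) fun d hd => h.choose_spec d hd)).toList
  else botS L

theorem le_botS_eq (c : SubstQuot L) (hc : SubstQuotLe c (botS L)) : c = botS L := by
  apply substQuot_ext
  rw [KInvQ_botS]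
  have := (substQuotLe_iff _ _).1 hc
  rw [KInvQ_botS] at this
  exact Set.subset_empty_iff.1 this

theorem botS_le (d : SubstQuot L) : SubstQuotLe (botS L) d := by
  rw [substQuotLe_iff, KInvQ_botS]
  exact Set.empty_subset _

theorem nonbot_rep {c : SubstQuot L} (hc : c ≠ botS L) :
    ∃ ς : FinSubst L, Quot.mk _ (some ς) = c := by
  obtain ⟨s, hs⟩ := Quot.exists_rep c
  cases s with
  | none => exact absurd hs (fun hh => hc (hh ▸ rfl))
  | some ς => exact ⟨ς, hs⟩
theorem isGLB_sInfS (S : Set (SubstQuot L)) :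
    (∀ d ∈ S, SubstQuotLe (sInfS S) d) ∧
    (∀ c, (∀ d ∈ S, SubstQuotLe c d) → SubstQuotLe c (sInfS S)) := by
  classical
  by_cases h : ∃ ς : FinSubst L, ∀ d ∈ S, SubstQuotLe (Quot.mk _ (some ς)) d
  · unfold sInfS
    rw [dif_pos h]
    have hfin : S.Finite :=
      Set.Finite.subset (interval_finite h.choose) fun d hd => h.choose_spec d hd
    have hmem : ∀ d, d ∈ hfin.toFinset.toList ↔ d ∈ S := by
      intro d
      rw [Finset.mem_toList, Set.Finite.mem_toFinset]
    constructor
    · intro d hd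
      rw [substQuotLe_iff, KInvQ_fold]
      intro x hx
      exact hx d ((hmem d).2 hd)
    · intro c hc
      rw [substQuotLe_iff, KInvQ_fold]
      intro x hx d hd
      exact (substQuotLe_iff c d).1 (hc d ((hmem d).1 hd)) hx
  · unfold sInfS
    rw [dif_neg h]
    refine ⟨fun d _ => botS_le d, fun c hc => ?_⟩
    by_cases hcb : c = botS L
    · rw [hcb]; exact botS_le _
    · exfalso
      obtain ⟨ς, hς⟩ := nonbot_rep hcb
      exact h ⟨ς, fun d hd => by rw [hς]; exact hc d hd⟩

/-! ### Uniqueness of the solved-form decomposition -/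

theorem conjOf_shape (eqs : List (ℕ × FOTerm L)) (hne : eqs ≠ []) :
    (∃ p : ℕ × FOTerm L, eqs = [p] ∧ conjOf eqs = .eq (.var p.1) p.2) ∨
    (∃ (p : ℕ × FOTerm L) (rest : List (ℕ × FOTerm L)), rest ≠ [] ∧ eqs = p :: rest ∧
      conjOf eqs = .and (.eq (.var p.1) p.2) (conjOf rest)) := by
  cases eqs with
  | nil => exact absurd rfl hne
  | cons p rest =>
    cases rest with
    | nil => exact Or.inl ⟨p, rfl, rfl⟩
    | cons q r => exact Or.inr ⟨p, q :: r, by simp, rfl, rfl⟩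

theorem conjOf_ne_ex (eqs : List (ℕ × FOTerm L)) (hne : eqs ≠ []) (x : ℕ) (G : FOForm L) :
    conjOf eqs ≠ .ex x G := by
  rcases conjOf_shape eqs hne with ⟨p, _, hc⟩ | ⟨p, rest, _, _, hc⟩ <;> rw [hc] <;>
    (intro hh; cases hh)

theorem conjOf_ne_tru (eqs : List (ℕ × FOTerm L)) (hne : eqs ≠ []) :
    conjOf eqs ≠ .tru := by
  rcases conjOf_shape eqs hne with ⟨p, _, hc⟩ | ⟨p, rest, _, _, hc⟩ <;> rw [hc] <;>
    (intro hh; cases hh)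

theorem conjOf_ne_fal (eqs : List (ℕ × FOTerm L)) (hne : eqs ≠ []) :
    conjOf eqs ≠ .fal := by
  rcases conjOf_shape eqs hne with ⟨p, _, hc⟩ | ⟨p, rest, _, _, hc⟩ <;> rw [hc] <;>
    (intro hh; cases hh)

theorem conjOf_inj : ∀ e1 e2 : List (ℕ × FOTerm L), conjOf e1 = conjOf e2 → e1 = e2 := by
  intro e1
  induction e1 with
  | nil =>
    intro e2 h
    cases e2 with
    | nil => rfl
    | cons q s => exact absurd h.symm (conjOf_ne_tru (q :: s) (by simp))
  | cons p r ih =>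
    intro e2 h
    cases e2 with
    | nil => exact absurd h (conjOf_ne_tru (p :: r) (by simp))
    | cons q s =>
      cases r with
      | nil =>
        cases s with
        | nil =>
          have h' : FOForm.eq (.var p.1) p.2 = FOForm.eq (.var q.1) q.2 := h
          simp only [FOForm.eq.injEq, FOTerm.var.injEq] at h'
          obtain ⟨h1, h2⟩ := h'
          have : p = q := Prod.ext h1 h2
          rw [this]
        | cons q' s' =>
          rw [conjOf_cons] at h
          cases h
      | cons p' r' =>
        cases s with
        | nil =>
          rw [conjOf_cons] at h
          cases h
        | cons q' s' =>
          rw [conjOf_cons, conjOf_cons] at h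
          simp only [FOForm.and.injEq, FOForm.eq.injEq, FOTerm.var.injEq] at h
          obtain ⟨⟨h1, h2⟩, h3⟩ := h
          have hpq : p = q := Prod.ext h1 h2
          have := ih (q' :: s') h3
          rw [hpq, this]

theorem exOf_conjOf_inj : ∀ (zs zs' : List ℕ) (eqs eqs' : List (ℕ × FOTerm L)),
    eqs ≠ [] → eqs' ≠ [] → exOf zs (conjOf eqs) = exOf zs' (conjOf eqs') →
    zs = zs' ∧ eqs = eqs' := by
  intro zs
  induction zs with
  | nil =>
    intro zs' eqs eqs' hne hne' h
    cases zs' with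
    | nil => exact ⟨rfl, conjOf_inj _ _ h⟩
    | cons z' r' => exact absurd h (conjOf_ne_ex eqs hne z' _)
  | cons z r ih =>
    intro zs' eqs eqs' hne hne' h
    cases zs' with
    | nil => exact absurd h.symm (conjOf_ne_ex eqs' hne' z _)
    | cons z' r' =>
      have h' : FOForm.ex z (exOf r (conjOf eqs)) = FOForm.ex z' (exOf r' (conjOf eqs')) := h
      simp only [FOForm.ex.injEq] at h'
      obtain ⟨h1, h2⟩ := h'
      obtain ⟨h3, h4⟩ := ih r' eqs eqs' hne hne' h2
      rw [h1, h3, h4]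
      exact ⟨rfl, rfl⟩

theorem exOf_conjOf_ne_tru (zs : List ℕ) (eqs : List (ℕ × FOTerm L)) (hne : eqs ≠ []) :
    exOf zs (conjOf eqs) ≠ .tru := by
  cases zs with
  | nil => exact conjOf_ne_tru eqs hne
  | cons z r => exact fun h => by cases h

theorem exOf_conjOf_ne_fal (zs : List ℕ) (eqs : List (ℕ × FOTerm L)) (hne : eqs ≠ []) :
    exOf zs (conjOf eqs) ≠ .fal := by
  cases zs with
  | nil => exact conjOf_ne_fal eqs hne
  | cons z r => exact fun h => by cases h

/-- Main lemma for the solved-form clause. -/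
theorem solved_clause (E : FOForm L) (hE : IsEQ E) (zs : List ℕ)
    (eqs : List (ℕ × FOTerm L)) (hne : eqs ≠ []) (hEeq : E = exOf zs (conjOf eqs))
    (hsf : SolvedForm E) :
    KInv (NE E) = KInv (some (solvedSubst eqs (E.fv \ (eqs.map Prod.fst).toFinset))) := by
  rcases hsf with h | h | ⟨zs', eqs', hne', hEeq', hnd, hno, _, _⟩
  · exact absurd (hEeq ▸ h) (exOf_conjOf_ne_tru zs eqs hne)
  · exact absurd (hEeq ▸ h) (exOf_conjOf_ne_fal zs eqs hne)
  · have hEE : exOf zs (conjOf eqs) = exOf zs' (conjOf eqs') := by rw [← hEeq, hEeq']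
    obtain ⟨hzz, hee⟩ := exOf_conjOf_inj zs zs' eqs eqs' hne hne' hEE
    subst hzz
    subst hee
    have hnd1 : (eqs.map Prod.fst).Nodup := (List.nodup_append.1 hnd).1
    have hdisj := (List.nodup_append.1 hnd).2.2
    have hlz : ∀ p ∈ eqs, p.1 ∉ zs :=
      fun p hp hmem => hdisj _ (List.mem_map.2 ⟨p, hp, rfl⟩) _ hmem rfl
    have hfvE : E.fv = (conjOf eqs).fv \ zs.toFinset := by rw [hEeq, fv_exOf]
    have hpz : ∀ y ∈ E.fv \ (eqs.map Prod.fst).toFinset, y ∉ zs := by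
      intro y hy hmem
      have := (Finset.mem_sdiff.1 hy).1
      rw [hfvE] at this
      exact (Finset.mem_sdiff.1 this).2 (List.mem_toFinset.2 hmem)
    have hpl : ∀ y ∈ E.fv \ (eqs.map Prod.fst).toFinset, y ∉ eqs.map Prod.fst := by
      intro y hy hmem
      exact (Finset.mem_sdiff.1 hy).2 (List.mem_toFinset.2 hmem)
    have hrp : ∀ p ∈ eqs, ∀ v ∈ p.2.vars, v ∉ zs →
        v ∈ E.fv \ (eqs.map Prod.fst).toFinset := by
      intro p hp v hv hvz
      refine Finset.mem_sdiff.2 ⟨?_, ?_⟩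
      · rw [hfvE]
        refine Finset.mem_sdiff.2 ⟨(mem_fv_conjOf eqs v).2 ⟨p, hp, Or.inr hv⟩,
          fun hm => hvz (List.mem_toFinset.1 hm)⟩
      · intro hm
        obtain ⟨q, hq, hqv⟩ := List.mem_map.1 (List.mem_toFinset.1 hm)
        exact hno q hq p hp (hqv ▸ hv)
    rw [KInv_NE hE]
    show _ = FinSubst.Inst (TM L) _
    ext h
    rw [Set.mem_setOf_eq]
    have hch := solved_char (TM L) zs eqs (E.fv \ (eqs.map Prod.fst).toFinset)
      hnd1 hlz hno hpz hpl hrp h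
    rw [← hEeq] at hch
    exact hch

end Stmt17

/-- The map `Φ` — sending the class of `True` to the
class of the empty substitution, the class of `False` to the class of `⊥`,
and the class of a consistent solved form
`∃z₁…∃z_m (x₁ = s₁ ∧ … ∧ xₙ = sₙ)` with parameters `y₁,…,y_k` to the class
of `{x₁↦s₁, …, xₙ↦sₙ, y₁↦y₁, …, y_k↦y_k}` — is a well-defined order
isomorphism from the lattice of EQ-formulas onto `Subst⊥/≈`; in particular
`Subst⊥/≈` is a complete lattice with greatest element the class of the
empty substitution and smallest element the class of `⊥`. -/
theorem subst_lattice_isomorphism {L : FOLang} (hc : L.HasConst) :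
    ∃ Φ : EQQuot L → SubstQuot L,
      Function.Bijective Φ ∧
      (∀ a b : EQQuot L, EQQuotLe a b ↔ SubstQuotLe (Φ a) (Φ b)) ∧
      Φ (Quot.mk _ (⟨.tru, IsEQ.tru⟩ : EQSub L)) =
        Quot.mk _ (some (FinSubst.empty L)) ∧
      Φ (Quot.mk _ (⟨.fal, IsEQ.fal⟩ : EQSub L)) =
        Quot.mk _ (none : Option (FinSubst L)) ∧
      (∀ (E : FOForm L) (hE : IsEQ E) (zs : List ℕ) (eqs : List (ℕ × FOTerm L)),
        eqs ≠ [] →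
        E = exOf zs (conjOf eqs) →
        SolvedForm E →
        EQConsistent E →
        Φ (Quot.mk _ (⟨E, hE⟩ : EQSub L)) =
          Quot.mk _ (some (solvedSubst eqs (E.fv \ (eqs.map Prod.fst).toFinset)))) ∧
      ∃ inst : CompleteLattice (SubstQuot L),
        (∀ a b : SubstQuot L, inst.le a b ↔ SubstQuotLe a b) ∧
        inst.top = Quot.mk _ (some (FinSubst.empty L)) ∧
        inst.bot = Quot.mk _ (none : Option (FinSubst L)) := by
  classical
  refine ⟨Stmt17.PhiF, ⟨?_, ?_⟩, ?_, ?_, ?_, ?_, ?_⟩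
  · -- injectivity
    intro a b hab
    obtain ⟨E, rfl⟩ := Quot.exists_rep a
    obtain ⟨F, rfl⟩ := Quot.exists_rep b
    apply Quot.sound
    have hK : Stmt17.KInv (Stmt17.NE E.1) = Stmt17.KInv (Stmt17.NE F.1) :=
      congrArg Stmt17.KInvQ hab
    exact ⟨(Stmt17.eqle_iff_KInv E.2 F.2).2 hK.le, (Stmt17.eqle_iff_KInv F.2 E.2).2 hK.ge⟩
  · -- surjectivity
    intro b
    obtain ⟨s, rfl⟩ := Quot.exists_rep b
    cases s with
    | none =>
      refine ⟨Quot.mk _ ⟨.fal, IsEQ.fal⟩, ?_⟩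
      apply Stmt17.substQuot_ext
      show Stmt17.KInv (Stmt17.NE .fal) = Stmt17.KInv none
      rw [Stmt17.KInv_NE IsEQ.fal]
      ext h
      exact iff_of_false (fun hh => hh) (Set.notMem_empty h)
    | some σ =>
      refine ⟨Quot.mk _ ⟨Stmt17.formOfS σ, Stmt17.isEQ_formOfS σ⟩, ?_⟩
      apply Stmt17.substQuot_ext
      show Stmt17.KInv (Stmt17.NE (Stmt17.formOfS σ)) = Stmt17.KInv (some σ)
      rw [Stmt17.KInv_NE (Stmt17.isEQ_formOfS σ)]
      ext h
      exact Stmt17.formOfS_char σ (Stmt17.TM L) h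
  · -- order isomorphism
    intro a b
    obtain ⟨E, rfl⟩ := Quot.exists_rep a
    obtain ⟨F, rfl⟩ := Quot.exists_rep b
    constructor
    · rintro ⟨E', F', hE', hF', hle⟩
      rw [Stmt17.substQuotLe_iff, ← hE', ← hF']
      show Stmt17.KInv (Stmt17.NE E'.1) ⊆ Stmt17.KInv (Stmt17.NE F'.1)
      exact (Stmt17.eqle_iff_KInv E'.2 F'.2).1 hle
    · intro hle
      refine ⟨E, F, rfl, rfl, (Stmt17.eqle_iff_KInv E.2 F.2).2 ?_⟩
      exact (Stmt17.substQuotLe_iff _ _).1 hle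
  · -- True ↦ empty substitution
    apply Stmt17.substQuot_ext
    show Stmt17.KInv (Stmt17.NE .tru) = Stmt17.KInv (some (FinSubst.empty L))
    rw [Stmt17.KInv_NE IsEQ.tru]
    have h2 : Stmt17.KInv (some (FinSubst.empty L)) = Set.univ := Stmt17.KInvQ_topS
    rw [h2]
    ext h
    exact iff_of_true trivial (Set.mem_univ h)
  · -- False ↦ ⊥
    apply Stmt17.substQuot_ext
    show Stmt17.KInv (Stmt17.NE .fal) = Stmt17.KInv none
    rw [Stmt17.KInv_NE IsEQ.fal]
    ext h
    exact iff_of_false (fun hh => hh) (Set.notMem_empty h)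
  · -- solved forms
    intro E hE zs eqs hne hEeq hsf _
    apply Stmt17.substQuot_ext
    exact Stmt17.solved_clause E hE zs eqs hne hEeq hsf
  · -- the complete lattice
    letI instPO : PartialOrder (SubstQuot L) :=
      { le := SubstQuotLe
        le_refl := fun a => (Stmt17.substQuotLe_iff a a).2 (subset_refl _)
        le_trans := fun a b c hab hbc => (Stmt17.substQuotLe_iff a c).2
          (subset_trans ((Stmt17.substQuotLe_iff a b).1 hab)
            ((Stmt17.substQuotLe_iff b c).1 hbc))
        le_antisymm := fun a b hab hba => Stmt17.substQuot_ext
          (Set.Subset.antisymm ((Stmt17.substQuotLe_iff a b).1 hab)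
            ((Stmt17.substQuotLe_iff b a).1 hba)) }
    letI instInf : InfSet (SubstQuot L) := ⟨Stmt17.sInfS⟩
    have hglb : ∀ S : Set (SubstQuot L), IsGLB S (sInf S) := by
      intro S
      obtain ⟨h1, h2⟩ := Stmt17.isGLB_sInfS S
      exact ⟨fun d hd => h1 d hd, fun c hc => h2 c fun d hd => hc hd⟩
    refine ⟨completeLatticeOfInf _ hglb, fun a b => Iff.rfl, ?_, ?_⟩
    · show Stmt17.sInfS ∅ = _
      unfold Stmt17.sInfS
      rw [dif_pos (⟨FinSubst.empty L, fun d hd => absurd hd (Set.notMem_empty d)⟩ :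
        ∃ ς : FinSubst L, ∀ d ∈ (∅ : Set (SubstQuot L)),
          SubstQuotLe (Quot.mk _ (some ς)) d)]
      rw [Set.Finite.toFinset_eq_empty.2 rfl, Finset.toList_empty]
      rfl
    · show Stmt17.sInfS Set.univ = _
      unfold Stmt17.sInfS
      rw [dif_neg]
      · rfl
      · rintro ⟨ς, hς⟩
        have h2 := (Stmt17.substQuotLe_iff _ _).1 (hς (Stmt17.botS L) (Set.mem_univ _))
        rw [Stmt17.KInvQ_botS] at h2
        exact Set.notMem_empty _ (h2 (Stmt17.hstar_mem ς 0))
end
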